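/- arXiv:0710.5385 — 11 statements merged into one kernel-verified Lean document; each statement's English description precedes it below -/
import Mathlib

section
/- Let h be an n×n complex matrix and let ρ : ℝ → (n×n complex matrices) be differentiable with ρ'(t) = D_h(ρ(t)) for all t. If ρ(0) is positive semidefinite, then ρ(t) is positive semidefinite for every t ≥ 0. -/
/-!
The PSD cone `C` is closed, and `D_h` points into it to second order: with `K = h†h / 2`,
for `π ⪰ 0` and `s ≥ 0`,
  `π + s D_h(π) + s² KπK = (1 - sK) π (1 - sK)† + s hπh† ⪰ 0`,
so `dist(π + s D_h(π), C) = O(s²)`. Comparing `ρ` near `t` with the Euler step from the point of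
`C` nearest to `ρ(t)` then bounds the right Dini derivative of `d(t) = dist(ρ(t), C)` by
`L d(t)`, `L` a Lipschitz constant of `D_h`, and Gronwall's inequality with `d(0) = 0` gives
`d ≡ 0` on `[0, ∞)`.
-/

open Matrix
open scoped ComplexOrder

attribute [local instance] Matrix.normedAddCommGroup Matrix.normedSpace

/-- The simple Lindblad generator `D_h`. -/
noncomputable def lindblad {n : ℕ} (h ρ : Matrix (Fin n) (Fin n) ℂ) :
    Matrix (Fin n) (Fin n) ℂ :=
  h * ρ * hᴴ - (1 / 2 : ℂ) • (hᴴ * h * ρ + ρ * (hᴴ * h))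

open Filter Set Metric Asymptotics
open scoped Topology NNReal

theorem Matrix.isClosed_setOf_posSemidef {n 𝕜 : Type*} [Fintype n] [RCLike 𝕜] :
    IsClosed {A : Matrix n n 𝕜 | A.PosSemidef} := by
  simp only [posSemidef_iff_dotProduct_mulVec, IsHermitian, ofPred_and, ofPred_forall]
  exact (isClosed_eq continuous_id.matrix_conjTranspose continuous_id).inter <|
    isClosed_iInter fun v => isClosed_le continuous_const <|
      continuous_const.dotProduct (continuous_id.matrix_mulVec continuous_const)

theorem tendsto_sub_const_nhdsGT (x : ℝ) : Tendsto (fun z => z - x) (𝓝[>] x) (𝓝[>] 0) :=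
  tendsto_nhdsWithin_iff.2 ⟨((continuous_sub_right x).tendsto' x 0 (sub_self x)).mono_left
    nhdsWithin_le_nhds, eventually_nhdsWithin_of_forall fun _ hz => mem_Ioi.2 (sub_pos.2 hz)⟩

theorem isLittleO_infDist_of_add_sq_smul_mem {E : Type*} [NormedAddCommGroup E]
    [NormedSpace ℝ E] {C : Set E} {y v e : E} (h : ∀ s : ℝ, 0 < s → y + s • v + s ^ 2 • e ∈ C) :
    (fun s : ℝ => infDist (y + s • v) C) =o[𝓝[>] 0] id := by
  have hbound : (fun s : ℝ => infDist (y + s • v) C) =O[𝓝[>] 0] fun s => s ^ 2 := by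
    refine IsBigO.of_bound ‖e‖ (eventually_nhdsWithin_of_forall fun s (hs : 0 < s) => ?_)
    calc ‖infDist (y + s • v) C‖ = infDist (y + s • v) C := abs_of_nonneg infDist_nonneg
      _ ≤ dist (y + s • v) (y + s • v + s ^ 2 • e) := infDist_le_dist_of_mem (h s hs)
      _ = ‖e‖ * ‖s ^ 2‖ := by rw [dist_self_add_right, norm_smul, mul_comm]
  exact hbound.trans_isLittleO ((isLittleO_pow_id one_lt_two).mono nhdsWithin_le_nhds)

section Invariance

variable {E : Type*} [NormedAddCommGroup E] [NormedSpace ℝ E] {C : Set E} {F : E → E}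
  {K : ℝ≥0} {f : ℝ → E}

theorem frequently_slope_infDist_lt [ProperSpace E] (hC : IsClosed C) (hne : C.Nonempty)
    (hF : LipschitzWith K F) (htan : ∀ y ∈ C, (fun s : ℝ => infDist (y + s • F y) C) =o[𝓝[>] 0] id)
    {x : ℝ} (hfx : HasDerivAt f (F (f x)) x) {r : ℝ} (hr : K * infDist (f x) C < r) :
    ∃ᶠ z in 𝓝[>] x, (z - x)⁻¹ * (infDist (f z) C - infDist (f x) C) < r := by
  obtain ⟨y, hyC, hy⟩ := hC.exists_infDist_eq_dist hne (f x)
  set d := infDist (f x) C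
  set ε := (r - K * d) / 3 with hε
  have hεpos : 0 < ε := by linarith
  have hlin : ∀ᶠ z in 𝓝[>] x, ‖f z - f x - (z - x) • F (f x)‖ ≤ ε * ‖z - x‖ :=
    ((hasDerivAt_iff_isLittleO.1 hfx).def hεpos).filter_mono nhdsWithin_le_nhds
  have hnear : ∀ᶠ z in 𝓝[>] x, infDist (y + (z - x) • F y) C ≤ ε * (z - x) := by
    filter_upwards [(tendsto_sub_const_nhdsGT x).eventually ((htan y hyC).def hεpos),
      self_mem_nhdsWithin] with z hz (hxz : x < z)
    simpa [abs_of_nonneg infDist_nonneg, abs_of_pos (sub_pos.2 hxz)] using hz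
  refine (hlin.and (hnear.and self_mem_nhdsWithin)).frequently.mono ?_
  rintro z ⟨hz₁, hz₂, hxz : x < z⟩
  set s := z - x
  have hs : 0 < s := sub_pos.2 hxz
  rw [Real.norm_of_nonneg hs.le] at hz₁
  have hF' : ‖F (f x) - F y‖ ≤ K * d := by
    rw [← dist_eq_norm, hy]; exact hF.dist_le_mul _ _
  have hdist : dist (f z) (y + s • F y) ≤ ε * s + d + s * (K * d) :=
    calc dist (f z) (y + s • F y)
        = ‖(f z - f x - s • F (f x)) + (f x - y) + s • (F (f x) - F y)‖ := by
          rw [dist_eq_norm]; congr 1; module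
      _ ≤ ‖f z - f x - s • F (f x)‖ + ‖f x - y‖ + ‖s • (F (f x) - F y)‖ := norm_add₃_le
      _ ≤ ε * s + d + s * (K * d) := by
          rw [norm_smul, Real.norm_of_nonneg hs.le, ← dist_eq_norm (f x), ← hy]
          gcongr
  have hsr : s * r = 3 * (ε * s) + s * (K * d) := by rw [hε]; ring
  rw [inv_mul_lt_iff₀ hs]
  linarith [infDist_le_infDist_add_dist (x := f z) (y := y + s • F y) (s := C), mul_pos hεpos hs]

theorem IsClosed.mem_of_hasDerivAt_of_isLittleO_infDist [ProperSpace E] (hC : IsClosed C)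
    (hF : LipschitzWith K F) (htan : ∀ y ∈ C, (fun s : ℝ => infDist (y + s • F y) C) =o[𝓝[>] 0] id)
    (hf : ∀ t, 0 ≤ t → HasDerivAt f (F (f t)) t) (h0 : f 0 ∈ C) {T : ℝ} (hT : 0 ≤ T) :
    f T ∈ C := by
  have hne : C.Nonempty := ⟨f 0, h0⟩
  have hcont : ContinuousOn (fun t => infDist (f t) C) (Icc 0 T) := fun t ht =>
    ((continuous_infDist_pt C).continuousAt.comp (hf t ht.1).continuousAt).continuousWithinAt
  have hgronwall := le_gronwallBound_of_liminf_deriv_right_le (f' := fun t => K * infDist (f t) C)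
    (δ := 0) (ε := 0) hcont
    (fun t ht _ hr => frequently_slope_infDist_lt hC hne hF htan (hf t ht.1) hr)
    ((hC.mem_iff_infDist_zero hne).1 h0).le (fun _ _ => (add_zero _).ge) T ⟨hT, le_rfl⟩
  rw [sub_zero, gronwallBound_ε0_δ0] at hgronwall
  exact (hC.mem_iff_infDist_zero hne).2 (hgronwall.antisymm infDist_nonneg)

end Invariance

noncomputable def lindbladLinearMap {n : ℕ} (h : Matrix (Fin n) (Fin n) ℂ) :
    Matrix (Fin n) (Fin n) ℂ →ₗ[ℂ] Matrix (Fin n) (Fin n) ℂ where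
  toFun := lindblad h
  map_add' A B := by
    simp only [lindblad, mul_add, add_mul, smul_add]
    abel
  map_smul' c A := by
    simp only [lindblad, mul_smul_comm, smul_mul_assoc, smul_sub, smul_add, RingHom.id_apply,
      smul_comm c]

theorem lipschitzWith_lindblad {n : ℕ} (h : Matrix (Fin n) (Fin n) ℂ) :
    ∃ K, LipschitzWith K (lindblad h) :=
  ⟨_, (lindbladLinearMap h).toContinuousLinearMap.lipschitz⟩

theorem add_smul_lindblad_add_sq_smul_eq_kraus {n : ℕ} (h π : Matrix (Fin n) (Fin n) ℂ) (s : ℝ) :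
    (1 - s • ((1 / 2 : ℂ) • (hᴴ * h))) * π * (1 - s • ((1 / 2 : ℂ) • (hᴴ * h)))ᴴ
        + s • (h * π * hᴴ)
      = π + s • lindblad h π
        + s ^ 2 • ((1 / 2 : ℂ) • (hᴴ * h) * π * ((1 / 2 : ℂ) • (hᴴ * h))) := by
  have hK : ((1 / 2 : ℂ) • (hᴴ * h))ᴴ = (1 / 2 : ℂ) • (hᴴ * h) := by
    simp [conjTranspose_smul, conjTranspose_mul]
  rw [conjTranspose_sub, conjTranspose_one, conjTranspose_smul, hK, star_trivial, lindblad]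
  simp only [sub_mul, mul_sub, one_mul, mul_one, smul_mul_assoc, mul_smul_comm, mul_assoc]
  module

theorem Matrix.PosSemidef.add_smul_lindblad_add_sq_smul {n : ℕ} {π : Matrix (Fin n) (Fin n) ℂ}
    (hπ : π.PosSemidef) (h : Matrix (Fin n) (Fin n) ℂ) {s : ℝ} (hs : 0 ≤ s) :
    (π + s • lindblad h π
      + s ^ 2 • ((1 / 2 : ℂ) • (hᴴ * h) * π * ((1 / 2 : ℂ) • (hᴴ * h)))).PosSemidef := by
  rw [← add_smul_lindblad_add_sq_smul_eq_kraus]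
  exact (hπ.mul_mul_conjTranspose_same _).add ((hπ.mul_mul_conjTranspose_same h).smul hs)

theorem stmt1 {n : ℕ} (h : Matrix (Fin n) (Fin n) ℂ)
    (ρ : ℝ → Matrix (Fin n) (Fin n) ℂ)
    (hderiv : ∀ t : ℝ, HasDerivAt ρ (lindblad h (ρ t)) t)
    (h0 : (ρ 0).PosSemidef) :
    ∀ t : ℝ, 0 ≤ t → (ρ t).PosSemidef := by
  intro t ht
  obtain ⟨K, hK⟩ := lipschitzWith_lindblad h
  have htan : ∀ π ∈ {A : Matrix (Fin n) (Fin n) ℂ | A.PosSemidef},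
      (fun s : ℝ => infDist (π + s • lindblad h π) {A | A.PosSemidef}) =o[𝓝[>] 0] id :=
    fun _ hπ => isLittleO_infDist_of_add_sq_smul_mem fun _ hs =>
      Matrix.PosSemidef.add_smul_lindblad_add_sq_smul hπ h hs.le
  exact Matrix.isClosed_setOf_posSemidef.mem_of_hasDerivAt_of_isLittleO_infDist hK htan
    (fun t _ => hderiv t) h0 ht
end

section
/- Let h and k be n×n complex matrices such that D_h(ρ) = D_k(ρ) for every n×n matrix ρ. If h is not normal (i.e. h h† ≠ h† h), then there exists a complex number c with |c| = 1 such that k = c·h. That is, the operator h generating a simple Lindblad generator is unique up to a phase factor unless h is normal. -/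
open Matrix

/-!
Put `G = hᴴh - kᴴk`. Equality of the generators says `hρhᴴ - kρkᴴ = ½(Gρ + ρG)` for all `ρ`.
Contracting this identity of superoperators against a test matrix `N` gives
`tr(hᴴN) h - tr(kᴴN) k = ½(tr N • G + tr(GN) • 1)`. If `h` is not a multiple of `k`, a test
matrix orthogonal to `k` but not to `h` puts `h` in the span of the Hermitian `G` and `1`, so `h`
is normal. Otherwise `h = d k`, and `ρ = 1` gives `[h, hᴴ] = [k, kᴴ]`, i.e.
`|d|² [k, kᴴ] = [k, kᴴ]` with `[k, kᴴ] ≠ 0`, so `|d| = 1`.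
-/

namespace Matrix

section Contract

variable {R : Type*} [CommSemiring R] {m n p q : Type*} [Fintype n] [Fintype q]
  [DecidableEq m] [DecidableEq n]

/-- Identifying `ρ ↦ A * ρ * B` with `A ⊗ Bᵀ`, this contracts the second factor against `N`. -/
def contract (N : Matrix q n R) : (Matrix m n R → Matrix p q R) →ₗ[R] Matrix p m R where
  toFun Φ := of fun a i => ∑ j, ∑ b, Φ (single i j 1) a b * N b j
  map_add' Φ Ψ := by ext; simp [add_mul, Finset.sum_add_distrib]
  map_smul' c Φ := by ext; simp [mul_assoc, Finset.mul_sum]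

theorem contract_mul_mul [Fintype m] (N : Matrix q n R) (A : Matrix p m R) (B : Matrix n q R) :
    contract N (fun ρ => A * ρ * B) = trace (B * N) • A := by
  ext a i
  simp only [contract, LinearMap.coe_mk, AddHom.coe_mk, of_apply, smul_apply, smul_eq_mul,
    trace, diag_apply, mul_apply, single_apply, Finset.sum_mul]
  simp [ite_and, mul_comm, mul_left_comm]

end Contract

section RCLike

open scoped ComplexOrder

variable {𝕜 : Type*} [RCLike 𝕜] {m n : Type*} [Fintype m] [Fintype n]

theorem exists_trace_conjTranspose_mul_eq_one_and_eq_zero {h k : Matrix m n 𝕜}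
    (hind : ∀ d : 𝕜, h ≠ d • k) :
    ∃ N : Matrix m n 𝕜, trace (hᴴ * N) = 1 ∧ trace (kᴴ * N) = 0 := by
  -- `N₀` is the component of `h` orthogonal to `k` for `⟪X, Y⟫ = tr(XᴴY)`;
  -- if `k = 0`, then `c = 0 / 0 = 0`.
  set c := trace (kᴴ * h) / trace (kᴴ * k)
  set N₀ := h - c • k with hN₀_def
  have hk : trace (kᴴ * N₀) = 0 := by
    by_cases hk : k = 0
    · simp [hk]
    rw [hN₀_def, Matrix.mul_sub, Matrix.mul_smul, trace_sub, trace_smul, smul_eq_mul,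
      div_mul_cancel₀ _ (trace_conjTranspose_mul_self_eq_zero_iff.not.mpr hk), sub_self]
  have hh : trace (hᴴ * N₀) = trace (N₀ᴴ * N₀) := by
    rw [hN₀_def, conjTranspose_sub, conjTranspose_smul, Matrix.sub_mul, trace_sub, Matrix.smul_mul,
      trace_smul, ← hN₀_def, hk, smul_zero, sub_zero]
  have hN₀ : trace (N₀ᴴ * N₀) ≠ 0 :=
    trace_conjTranspose_mul_self_eq_zero_iff.not.mpr (sub_ne_zero.mpr (hind c))
  refine ⟨(trace (N₀ᴴ * N₀))⁻¹ • N₀, ?_, ?_⟩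
  · rw [Matrix.mul_smul, trace_smul, hh, smul_eq_mul, inv_mul_cancel₀ hN₀]
  · rw [Matrix.mul_smul, trace_smul, hk, smul_zero]

theorem commute_smul_add_smul_one_conjTranspose [DecidableEq n] {G : Matrix n n 𝕜}
    (hG : G.IsHermitian) (a b : 𝕜) :
    Commute (a • G + b • 1) (a • G + b • 1)ᴴ := by
  rw [conjTranspose_add, conjTranspose_smul, conjTranspose_smul, hG.eq, conjTranspose_one]
  exact ((Commute.refl G).smul_left a |>.add_left ((Commute.one_left G).smul_left b)).smul_right _
    |>.add_right (((Commute.one_right G).smul_left a).add_left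
      ((Commute.refl 1).smul_left b) |>.smul_right _)

theorem norm_eq_one_of_smul_commutator_eq {k : Matrix n n 𝕜} {d : 𝕜} (hk : k * kᴴ ≠ kᴴ * k)
    (hd : d • k * (d • k)ᴴ - (d • k)ᴴ * (d • k) = k * kᴴ - kᴴ * k) : ‖d‖ = 1 := by
  rw [conjTranspose_smul, smul_mul_smul, smul_mul_smul, mul_comm (star d), ← smul_sub] at hd
  have hd1 := smul_left_injective 𝕜 (sub_ne_zero.mpr hk) (hd.trans (one_smul 𝕜 _).symm)
  rw [RCLike.star_def, RCLike.mul_conj] at hd1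
  exact (pow_eq_one_iff_of_nonneg (norm_nonneg d) two_ne_zero).mp (by exact_mod_cast hd1)

end RCLike

end Matrix

section Lindblad

variable {n : ℕ} {h k : Matrix (Fin n) (Fin n) ℂ}

theorem mul_mul_conjTranspose_sub_eq_of_lindblad_eq {ρ : Matrix (Fin n) (Fin n) ℂ}
    (heq : lindblad h ρ = lindblad k ρ) :
    h * ρ * hᴴ - k * ρ * kᴴ = (1 / 2 : ℂ) • ((hᴴ * h - kᴴ * k) * ρ + ρ * (hᴴ * h - kᴴ * k)) := by
  rw [lindblad, lindblad, sub_eq_sub_iff_sub_eq_sub] at heq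
  rw [heq, ← smul_sub, Matrix.sub_mul, Matrix.mul_sub]
  abel_nf

theorem commutator_eq_of_lindblad_eq (heq : lindblad h 1 = lindblad k 1) :
    h * hᴴ - hᴴ * h = k * kᴴ - kᴴ * k := by
  have h1 := mul_mul_conjTranspose_sub_eq_of_lindblad_eq heq
  simp only [Matrix.mul_one, Matrix.one_mul, ← two_smul ℂ, smul_smul] at h1
  norm_num at h1
  rwa [sub_eq_sub_iff_sub_eq_sub]

theorem trace_smul_sub_trace_smul_eq_of_lindblad_eq
    (heq : ∀ ρ, lindblad h ρ = lindblad k ρ) (N : Matrix (Fin n) (Fin n) ℂ) :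
    trace (hᴴ * N) • h - trace (kᴴ * N) • k =
      (1 / 2 : ℂ) • (trace N • (hᴴ * h - kᴴ * k) + trace ((hᴴ * h - kᴴ * k) * N) • 1) := by
  have hfun : (fun ρ => h * ρ * hᴴ) - (fun ρ => k * ρ * kᴴ) = (1 / 2 : ℂ) •
      ((fun ρ => (hᴴ * h - kᴴ * k) * ρ * 1) + (fun ρ => 1 * ρ * (hᴴ * h - kᴴ * k))) := by
    ext1 ρ
    simpa using mul_mul_conjTranspose_sub_eq_of_lindblad_eq (heq ρ)
  have hcontract := congrArg (contract N) hfun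
  rwa [map_sub, map_smul, map_add, contract_mul_mul, contract_mul_mul, contract_mul_mul,
    contract_mul_mul, Matrix.one_mul] at hcontract

theorem commute_conjTranspose_of_lindblad_eq (heq : ∀ ρ, lindblad h ρ = lindblad k ρ)
    (hind : ∀ d : ℂ, h ≠ d • k) : Commute h hᴴ := by
  obtain ⟨N, hhN, hkN⟩ := exists_trace_conjTranspose_mul_eq_one_and_eq_zero hind
  have hG : (hᴴ * h - kᴴ * k).IsHermitian := by simp [IsHermitian]
  have hh := trace_smul_sub_trace_smul_eq_of_lindblad_eq heq N
  rw [hhN, hkN, one_smul, zero_smul, sub_zero, smul_add, smul_smul, smul_smul] at hh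
  rw [hh]
  exact commute_smul_add_smul_one_conjTranspose hG _ _

end Lindblad

theorem stmt5 {n : ℕ} (h k : Matrix (Fin n) (Fin n) ℂ)
    (heq : ∀ ρ : Matrix (Fin n) (Fin n) ℂ, lindblad h ρ = lindblad k ρ)
    (hnotnormal : h * hᴴ ≠ hᴴ * h) :
    ∃ c : ℂ, ‖c‖ = 1 ∧ k = c • h := by
  by_cases hdep : ∃ d : ℂ, h = d • k
  · obtain ⟨d, rfl⟩ := hdep
    have hcomm := commutator_eq_of_lindblad_eq (heq 1)
    have hk : k * kᴴ ≠ kᴴ * k := sub_ne_zero.mp (hcomm ▸ sub_ne_zero.mpr hnotnormal)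
    have hd := norm_eq_one_of_smul_commutator_eq hk hcomm
    have hd₀ : d ≠ 0 := norm_ne_zero_iff.mp (hd ▸ one_ne_zero)
    exact ⟨d⁻¹, by rw [norm_inv, hd, inv_one], (inv_smul_smul₀ hd₀ k).symm⟩
  · push Not at hdep
    exact absurd (commute_conjTranspose_of_lindblad_eq heq hdep).eq hnotnormal
end

section
/- (No purifying in finite time.) Let h be an n×n complex matrix and let ρ : ℝ → (n×n complex matrices) be differentiable with ρ'(t) = D_h(ρ(t)) for all t. If ρ(0) is positive semidefinite, then for every t ≥ 0 the rank of ρ(t) is at least the rank of ρ(0); the rank cannot decrease along the evolution. -/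
/-!
Conjugating by `E(s) = exp (s K)`, `K = ½ h†h`, removes the anticommutator part of `D_h`: the
interaction-picture state `σ(s) = E(s) ρ(s) E(s)` solves `σ' = B σ B†` with `B(s) = E(s) h E(-s)`.
This flow preserves positivity (a Grönwall argument on the most negative value of the quadratic
form of `σ`), so `σ' ≥ 0`, hence `σ(t) ≥ σ(0) = ρ(0)` and `ker σ(t) ⊆ ker ρ(0)`. As `E(t)` is
invertible, `rank ρ(t) = rank σ(t) ≥ rank ρ(0)`.
-/

open Matrix
open scoped ComplexOrder

attribute [local instance] Matrix.normedAddCommGroup Matrix.normedSpace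

open Set NormedSpace

theorem HasDerivAt.matrix_mul {𝕜 R : Type*} [NontriviallyNormedField 𝕜] [NormedRing R]
    [NormedAlgebra 𝕜 R] {l m n : Type*} [Fintype m] [Fintype n]
    {f : 𝕜 → Matrix l m R} {g : 𝕜 → Matrix m n R} {f' : Matrix l m R} {g' : Matrix m n R} {t : 𝕜}
    (hf : HasDerivAt f f' t) (hg : HasDerivAt g g' t) :
    HasDerivAt (fun s => f s * g s) (f' * g t + f t * g') t := by
  refine hasDerivAt_pi.2 fun i => hasDerivAt_pi.2 fun k => ?_
  simp only [mul_apply, Matrix.add_apply, ← Finset.sum_add_distrib]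
  exact HasDerivAt.fun_sum fun j _ =>
    (hasDerivAt_pi.1 (hasDerivAt_pi.1 hf i) j).mul (hasDerivAt_pi.1 (hasDerivAt_pi.1 hg j) k)

-- `HasDerivAt` only sees the topology, so the `linfty` operator norm (a Banach algebra norm with
-- the same topology as the sup norm in force) may be used to differentiate `exp`.
theorem Matrix.hasDerivAt_exp_real_smul {m : Type*} [Fintype m] [DecidableEq m]
    (K : Matrix m m ℂ) (t : ℝ) :
    HasDerivAt (fun s : ℝ => exp (s • K)) (exp (t • K) * K) t := by
  let _ : NormedRing (Matrix m m ℂ) := Matrix.linftyOpNormedRing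
  let _ : NormedAlgebra ℝ (Matrix m m ℂ) := Matrix.linftyOpNormedAlgebra
  have : ProperSpace (Matrix m m ℂ) :=
    @FiniteDimensional.proper_real _ NonUnitalNormedRing.toNormedAddCommGroup
      (NormedAlgebra.toNormedSpace _) _
  exact hasDerivAt_exp_smul_const K t

section ReForm

variable {ι : Type*} [Fintype ι]

/-- The interaction-picture state is not known to be Hermitian, so only the real part of its
quadratic form is controlled. -/
noncomputable def reForm (A : Matrix ι ι ℂ) (v : ι → ℂ) : ℝ :=
  (star v ⬝ᵥ A *ᵥ v).re

theorem reForm_conj (A B : Matrix ι ι ℂ) (v : ι → ℂ) :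
    reForm (B * A * Bᴴ) v = reForm A (Bᴴ *ᵥ v) := by
  rw [reForm, reForm, star_mulVec, conjTranspose_conjTranspose, ← mulVec_mulVec,
    ← mulVec_mulVec, dotProduct_mulVec (star v) B]

theorem reForm_real_smul (A : Matrix ι ι ℂ) (c : ℝ) (v : ι → ℂ) :
    reForm A ((c : ℂ) • v) = c ^ 2 * reForm A v := by
  simp only [reForm, mulVec_smul, star_smul, smul_dotProduct, dotProduct_smul, Complex.star_def,
    Complex.conj_ofReal, smul_eq_mul, Complex.re_ofReal_mul]
  ring

theorem continuous_reForm : Continuous fun p : Matrix ι ι ℂ × (ι → ℂ) => reForm p.1 p.2 :=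
  Complex.continuous_re.comp
    ((continuous_star.comp continuous_snd).dotProduct (continuous_fst.matrix_mulVec continuous_snd))

theorem Matrix.PosSemidef.reForm_nonneg {A : Matrix ι ι ℂ} (hA : A.PosSemidef) (v : ι → ℂ) :
    0 ≤ reForm A v :=
  (Complex.nonneg_iff.1 (hA.dotProduct_mulVec_nonneg v)).1

theorem HasDerivAt.reForm {σ : ℝ → Matrix ι ι ℂ} {σ' : Matrix ι ι ℂ} {t : ℝ}
    (hσ : HasDerivAt σ σ' t) (v : ι → ℂ) :
    HasDerivAt (fun s => reForm (σ s) v) (reForm σ' v) t := by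
  have hform : HasDerivAt (fun s => star v ⬝ᵥ σ s *ᵥ v) (star v ⬝ᵥ σ' *ᵥ v) t := by
    simp only [dotProduct, mulVec, Finset.mul_sum]
    exact HasDerivAt.fun_sum fun i _ => HasDerivAt.fun_sum fun j _ =>
      ((hasDerivAt_pi.1 (hasDerivAt_pi.1 hσ i) j).mul_const (v j)).const_mul (star v i)
  exact Complex.reCLM.hasFDerivAt.comp_hasDerivAt t hform

/-- Vanishes exactly when `reForm A` is nonnegative. -/
noncomputable def reFormNegSup (A : Matrix ι ι ℂ) : ℝ :=
  sSup ((fun v => -reForm A v) '' Metric.closedBall 0 1)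

theorem bddAbove_neg_reForm (A : Matrix ι ι ℂ) :
    BddAbove ((fun v => -reForm A v) '' Metric.closedBall 0 1) :=
  (isCompact_closedBall 0 1).bddAbove_image
    (continuous_reForm.comp (Continuous.prodMk_right A)).neg.continuousOn

theorem neg_reForm_le_reFormNegSup (A : Matrix ι ι ℂ) {v : ι → ℂ} (hv : ‖v‖ ≤ 1) :
    -reForm A v ≤ reFormNegSup A :=
  le_csSup (bddAbove_neg_reForm A) ⟨v, mem_closedBall_zero_iff.2 hv, rfl⟩

theorem reFormNegSup_nonneg (A : Matrix ι ι ℂ) : 0 ≤ reFormNegSup A := by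
  simpa [reForm] using neg_reForm_le_reFormNegSup A (v := 0) (by simp)

theorem reFormNegSup_le {A : Matrix ι ι ℂ} {c : ℝ} (h : ∀ v : ι → ℂ, ‖v‖ ≤ 1 → -reForm A v ≤ c) :
    reFormNegSup A ≤ c :=
  csSup_le ((Metric.nonempty_closedBall.2 zero_le_one).image _) <| by
    rintro _ ⟨v, hv, rfl⟩
    exact h v (mem_closedBall_zero_iff.1 hv)

theorem neg_reForm_le_sq_norm_mul (A : Matrix ι ι ℂ) (v : ι → ℂ) :
    -reForm A v ≤ ‖v‖ ^ 2 * reFormNegSup A := by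
  rcases eq_or_ne v 0 with rfl | hv
  · simp [reForm]
  have hnorm : 0 < ‖v‖ := norm_pos_iff.2 hv
  have hunit : ‖((‖v‖⁻¹ : ℝ) : ℂ) • v‖ ≤ 1 := by
    rw [norm_smul, Complex.norm_real, norm_inv, norm_norm, inv_mul_cancel₀ hnorm.ne']
  have := neg_reForm_le_reFormNegSup A hunit
  rw [reForm_real_smul, inv_pow, ← mul_neg, inv_mul_le_iff₀ (by positivity)] at this
  exact this

theorem continuous_reFormNegSup : Continuous (reFormNegSup : Matrix ι ι ℂ → ℝ) :=
  (isCompact_closedBall 0 1).continuous_sSup continuous_reForm.neg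

end ReForm

theorem eqOn_zero_of_le_mul_integral {N : ℝ → ℝ} {C T : ℝ} (hN : Continuous N)
    (hN0 : ∀ s ∈ Icc 0 T, 0 ≤ N s) (hle : ∀ s ∈ Icc 0 T, N s ≤ C * ∫ u in 0..s, N u) :
    EqOn N 0 (Icc 0 T) := by
  set G : ℝ → ℝ := fun s => ∫ u in 0..s, N u
  have hG : ∀ s, HasDerivAt G (N s) s := fun s =>
    intervalIntegral.integral_hasDerivAt_right (hN.intervalIntegrable _ _)
      (hN.stronglyMeasurableAtFilter _ _) hN.continuousAt
  have hG0 : ∀ s ∈ Icc 0 T, 0 ≤ G s := fun s hs =>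
    intervalIntegral.integral_nonneg hs.1 fun u hu => hN0 u ⟨hu.1, hu.2.trans hs.2⟩
  have hGzero : EqOn G 0 (Icc 0 T) :=
    eq_zero_of_abs_deriv_le_mul_abs_self_of_eq_zero_right
      (fun s _ => (hG s).continuousAt.continuousWithinAt) (fun s _ => (hG s).hasDerivWithinAt)
      intervalIntegral.integral_same fun s hs => by
        have hs' : s ∈ Icc 0 T := Ico_subset_Icc_self hs
        rw [Real.norm_of_nonneg (hN0 s hs'), Real.norm_of_nonneg (hG0 s hs')]
        exact hle s hs'
  intro s hs
  refine le_antisymm ?_ (hN0 s hs)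
  simpa [G, hGzero hs] using hle s hs

section ConjugationFlow

variable {ι : Type*} [Fintype ι] {σ B : ℝ → Matrix ι ι ℂ}

theorem hasDerivAt_reForm_of_hasDerivAt_conj (hσ : ∀ u, HasDerivAt σ (B u * σ u * (B u)ᴴ) u)
    (v : ι → ℂ) (u : ℝ) :
    HasDerivAt (fun s => reForm (σ s) v) (reForm (σ u) ((B u)ᴴ *ᵥ v)) u := by
  simpa only [reForm_conj] using (hσ u).reForm v

/-- `N = reFormNegSup ∘ σ` satisfies `N s ≤ b² ∫₀ˢ N`, with `b` a bound for `B†` on `[0, t]`,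
so `N = 0` by Grönwall. -/
theorem reForm_nonneg_of_hasDerivAt_conj (hB : Continuous B)
    (hσ : ∀ u, HasDerivAt σ (B u * σ u * (B u)ᴴ) u) (h0 : ∀ v, 0 ≤ reForm (σ 0) v)
    {t : ℝ} (ht : 0 ≤ t) (v : ι → ℂ) : 0 ≤ reForm (σ t) v := by
  obtain ⟨b, hb⟩ : BddAbove ((fun p : ℝ × (ι → ℂ) => ‖(B p.1)ᴴ *ᵥ p.2‖) ''
      Icc 0 t ×ˢ Metric.closedBall 0 1) :=
    (isCompact_Icc.prod (isCompact_closedBall 0 1)).bddAbove_image <| Continuous.continuousOn <|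
      ((hB.comp continuous_fst).matrix_conjTranspose.matrix_mulVec continuous_snd).norm
  have hσc : Continuous σ := continuous_iff_continuousAt.2 fun u => (hσ u).continuousAt
  set N : ℝ → ℝ := fun s => reFormNegSup (σ s)
  have hN : Continuous N := continuous_reFormNegSup.comp hσc
  have hle : ∀ s ∈ Icc 0 t, N s ≤ b ^ 2 * ∫ u in 0..s, N u := by
    intro s hs
    refine reFormNegSup_le fun w hw => ?_
    have hcont : Continuous fun u => reForm (σ u) ((B u)ᴴ *ᵥ w) :=
      continuous_reForm.comp (hσc.prodMk (hB.matrix_conjTranspose.matrix_mulVec continuous_const))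
    have hFTC := intervalIntegral.integral_eq_sub_of_hasDerivAt
      (fun u _ => hasDerivAt_reForm_of_hasDerivAt_conj hσ w u) (hcont.intervalIntegrable 0 s)
    have hstep : ∀ u ∈ Icc 0 s, -reForm (σ u) ((B u)ᴴ *ᵥ w) ≤ b ^ 2 * N u := fun u hu =>
      (neg_reForm_le_sq_norm_mul _ _).trans <| mul_le_mul_of_nonneg_right
        (pow_le_pow_left₀ (norm_nonneg _) (hb ⟨(u, w), ⟨⟨hu.1, hu.2.trans hs.2⟩,
          mem_closedBall_zero_iff.2 hw⟩, rfl⟩) 2) (reFormNegSup_nonneg _)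
    calc -reForm (σ s) w ≤ -reForm (σ s) w + reForm (σ 0) w := by linarith [h0 w]
      _ = ∫ u in 0..s, -reForm (σ u) ((B u)ᴴ *ᵥ w) := by
        rw [intervalIntegral.integral_neg, hFTC]; ring
      _ ≤ ∫ u in 0..s, b ^ 2 * N u :=
        intervalIntegral.integral_mono_on hs.1 (hcont.neg.intervalIntegrable 0 s)
          ((continuous_const.mul hN).intervalIntegrable 0 s) hstep
      _ = b ^ 2 * ∫ u in 0..s, N u := intervalIntegral.integral_const_mul _ _
  have hNt : N t = 0 :=
    eqOn_zero_of_le_mul_integral hN (fun s _ => reFormNegSup_nonneg _) hle ⟨ht, le_rfl⟩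
  simpa [N, hNt] using neg_reForm_le_sq_norm_mul (σ t) v

theorem reForm_le_of_hasDerivAt_conj (hB : Continuous B)
    (hσ : ∀ u, HasDerivAt σ (B u * σ u * (B u)ᴴ) u) (h0 : ∀ v, 0 ≤ reForm (σ 0) v)
    {t : ℝ} (ht : 0 ≤ t) (v : ι → ℂ) : reForm (σ 0) v ≤ reForm (σ t) v := by
  refine monotoneOn_of_hasDerivWithinAt_nonneg (convex_Ici 0)
    (fun u _ => (hasDerivAt_reForm_of_hasDerivAt_conj hσ v u).continuousAt.continuousWithinAt)
    (fun u _ => (hasDerivAt_reForm_of_hasDerivAt_conj hσ v u).hasDerivWithinAt)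
    (fun u hu => reForm_nonneg_of_hasDerivAt_conj hB hσ h0 (interior_Ici.subset hu).le _)
    self_mem_Ici ht ht

end ConjugationFlow

theorem Matrix.PosSemidef.mulVec_eq_zero_of_reForm_le {ι : Type*} [Fintype ι]
    {A B : Matrix ι ι ℂ} (hA : A.PosSemidef) (hAB : ∀ v, reForm A v ≤ reForm B v) {x : ι → ℂ}
    (hx : B *ᵥ x = 0) : A *ᵥ x = 0 := by
  refine (hA.dotProduct_mulVec_zero_iff x).1 ?_
  obtain ⟨hre, him⟩ := Complex.nonneg_iff.1 (hA.dotProduct_mulVec_nonneg x)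
  have hle : reForm A x ≤ 0 := by simpa [reForm, hx] using hAB x
  exact Complex.ext (le_antisymm hle hre) him.symm

theorem Matrix.rank_le_rank_of_mulVec_eq_zero {K m n : Type*} [Field K] [Fintype n]
    {A B : Matrix m n K} (h : ∀ x, B *ᵥ x = 0 → A *ᵥ x = 0) : A.rank ≤ B.rank := by
  have hA := LinearMap.finrank_range_add_finrank_ker A.mulVecLin
  have hB := LinearMap.finrank_range_add_finrank_ker B.mulVecLin
  have hker := Submodule.finrank_mono (show LinearMap.ker B.mulVecLin ≤ LinearMap.ker A.mulVecLin
    from fun x hx => h x hx)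
  rw [rank, rank]
  omega

section Lindblad

variable {n : ℕ} (h : Matrix (Fin n) (Fin n) ℂ)

noncomputable def dampingExp (s : ℝ) : Matrix (Fin n) (Fin n) ℂ :=
  exp (s • ((1 / 2 : ℂ) • (hᴴ * h)))

noncomputable def jumpInteraction (s : ℝ) : Matrix (Fin n) (Fin n) ℂ :=
  dampingExp h s * h * dampingExp h (-s)

noncomputable def interactionPicture (ρ : Matrix (Fin n) (Fin n) ℂ) (s : ℝ) :
    Matrix (Fin n) (Fin n) ℂ :=
  dampingExp h s * ρ * dampingExp h s

theorem dampingExp_zero : dampingExp h 0 = 1 := by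
  simp [dampingExp]

theorem interactionPicture_zero (ρ : Matrix (Fin n) (Fin n) ℂ) :
    interactionPicture h ρ 0 = ρ := by
  simp [interactionPicture, dampingExp_zero]

theorem dampingExp_mul_neg (s : ℝ) : dampingExp h s * dampingExp h (-s) = 1 := by
  rw [dampingExp, dampingExp, ← Matrix.exp_add_of_commute _ _
    (((Commute.refl _).smul_left s).smul_right (-s))]
  simp

theorem dampingExp_neg_mul (s : ℝ) : dampingExp h (-s) * dampingExp h s = 1 := by
  simpa using dampingExp_mul_neg h (-s)

theorem conjTranspose_dampingExp (s : ℝ) : (dampingExp h s)ᴴ = dampingExp h s := by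
  rw [dampingExp, ← Matrix.exp_conjTranspose]
  simp [conjTranspose_smul]

theorem dampingExp_commute (s : ℝ) : Commute (dampingExp h s) (hᴴ * h) :=
  (((Commute.refl (hᴴ * h)).smul_left (1 / 2 : ℂ)).smul_left s).exp_left

theorem hasDerivAt_dampingExp (t : ℝ) :
    HasDerivAt (dampingExp h) (dampingExp h t * ((1 / 2 : ℂ) • (hᴴ * h))) t :=
  Matrix.hasDerivAt_exp_real_smul _ t

theorem continuous_dampingExp : Continuous (dampingExp h) :=
  continuous_iff_continuousAt.2 fun t => (hasDerivAt_dampingExp h t).continuousAt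

theorem continuous_jumpInteraction : Continuous (jumpInteraction h) :=
  ((continuous_dampingExp h).matrix_mul continuous_const).matrix_mul
    ((continuous_dampingExp h).comp continuous_neg)

theorem hasDerivAt_interactionPicture {ρ : ℝ → Matrix (Fin n) (Fin n) ℂ}
    (hρ : ∀ t, HasDerivAt ρ (lindblad h (ρ t)) t) (t : ℝ) :
    HasDerivAt (fun s => interactionPicture h (ρ s) s)
      (jumpInteraction h t * interactionPicture h (ρ t) t * (jumpInteraction h t)ᴴ) t := by
  refine (((hasDerivAt_dampingExp h t).matrix_mul (hρ t)).matrix_mul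
    (hasDerivAt_dampingExp h t)).congr_deriv ?_
  have hE : dampingExp h t * (hᴴ * h) = hᴴ * h * dampingExp h t := dampingExp_commute h t
  have hcancel : ∀ X, dampingExp h (-t) * (dampingExp h t * X) = X := fun X => by
    rw [← Matrix.mul_assoc, dampingExp_neg_mul, Matrix.one_mul]
  have hcancel' : ∀ X, dampingExp h t * (dampingExp h (-t) * X) = X := fun X => by
    rw [← Matrix.mul_assoc, dampingExp_mul_neg, Matrix.one_mul]
  simp only [interactionPicture, jumpInteraction, conjTranspose_mul, conjTranspose_dampingExp,
    Matrix.mul_assoc, hcancel, hcancel', lindblad, Matrix.mul_add, Matrix.add_mul, Matrix.mul_sub,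
    Matrix.sub_mul, Matrix.mul_smul, Matrix.smul_mul]
  rw [hE, Matrix.mul_assoc hᴴ h]
  module

theorem rank_interactionPicture (ρ : Matrix (Fin n) (Fin n) ℂ) (t : ℝ) :
    (interactionPicture h ρ t).rank = ρ.rank := by
  have hdet : IsUnit (dampingExp h t).det :=
    (Matrix.isUnit_iff_isUnit_det _).1 (Matrix.isUnit_exp _)
  rw [interactionPicture, rank_mul_eq_left_of_isUnit_det _ _ hdet,
    rank_mul_eq_right_of_isUnit_det _ _ hdet]

end Lindblad

/-- No purifying in finite time: the rank cannot decrease along the evolution. -/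
theorem stmt6 {n : ℕ} (h : Matrix (Fin n) (Fin n) ℂ)
    (ρ : ℝ → Matrix (Fin n) (Fin n) ℂ)
    (hderiv : ∀ t : ℝ, HasDerivAt ρ (lindblad h (ρ t)) t)
    (h0 : (ρ 0).PosSemidef) :
    ∀ t : ℝ, 0 ≤ t → (ρ 0).rank ≤ (ρ t).rank := by
  intro t ht
  have hmono := reForm_le_of_hasDerivAt_conj (continuous_jumpInteraction h)
    (hasDerivAt_interactionPicture h hderiv)
    (by simpa only [interactionPicture_zero] using h0.reForm_nonneg) ht
  simp only [interactionPicture_zero] at hmono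
  calc (ρ 0).rank ≤ (interactionPicture h (ρ t) t).rank :=
        rank_le_rank_of_mulVec_eq_zero fun x hx => h0.mulVec_eq_zero_of_reForm_le hmono hx
    _ = (ρ t).rank := rank_interactionPicture h (ρ t) t
end

section
/- (Dissipation: uniqueness of the stationary state.) Let h be an indecomposable, invertible n×n complex matrix. Then a density matrix ρ satisfies D_h(ρ) = 0 if and only if ρ = (h†h)⁻¹ / Tr[(h†h)⁻¹]; this is the unique stationary state, and it lies in the interior of the set of states. -/
open Matrix
open scoped ComplexOrder

/-- A matrix is indecomposable if the only orthogonal projections commuting with it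
are `0` and `1`. -/
def Indecomposable {n : ℕ} (h : Matrix (Fin n) (Fin n) ℂ) : Prop :=
  ∀ P : Matrix (Fin n) (Fin n) ℂ, P = Pᴴ → P * P = P → P * h = h * P → P = 0 ∨ P = 1

private lemma trace_mul_conjTranspose_self_eq_zero' {n : ℕ}
    {M : Matrix (Fin n) (Fin n) ℂ} (hM : (M * Mᴴ).trace = 0) : M = 0 := by
  have key : ∑ i, ∑ j, Complex.normSq (M i j) = 0 := by
    have h1 : (M * Mᴴ).trace = ((∑ i, ∑ j, Complex.normSq (M i j) : ℝ) : ℂ) := by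
      simp only [Matrix.trace, Matrix.diag, Matrix.mul_apply, Matrix.conjTranspose_apply]
      push_cast
      congr 1; funext i; congr 1; funext j
      rw [← Complex.mul_conj]
      rfl
    have h2 := h1 ▸ hM
    exact_mod_cast h2
  ext i j
  have h2 : ∀ i ∈ Finset.univ, (0:ℝ) ≤ ∑ j, Complex.normSq (M i j) :=
    fun i _ => Finset.sum_nonneg fun j _ => Complex.normSq_nonneg _
  have h3 := (Finset.sum_eq_zero_iff_of_nonneg h2).mp key i (Finset.mem_univ i)
  have h4 := (Finset.sum_eq_zero_iff_of_nonneg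
    (fun j _ => Complex.normSq_nonneg (M i j))).mp h3 j (Finset.mem_univ j)
  simpa [Complex.normSq_eq_zero] using h4

/-- Dissipation: the unique stationary state of an indecomposable invertible `h`. -/
theorem stmt10 {n : ℕ} (h : Matrix (Fin n) (Fin n) ℂ)
    (hind : Indecomposable h) (hinv : IsUnit h)
    (ρ : Matrix (Fin n) (Fin n) ℂ) (hρ : ρ.PosSemidef) (htr : ρ.trace = 1) :
    lindblad h ρ = 0 ↔ ρ = (((hᴴ * h)⁻¹).trace)⁻¹ • (hᴴ * h)⁻¹ := by
  rcases Nat.eq_zero_or_pos n with hn | hn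
  · subst hn
    exact ⟨fun _ => Subsingleton.elim _ _, fun _ => Subsingleton.elim _ _⟩
  have hdet : IsUnit h.det := (Matrix.isUnit_iff_isUnit_det h).mp hinv
  have hdetH : IsUnit hᴴ.det := by rw [Matrix.det_conjTranspose]; exact hdet.star
  have hhinv : h⁻¹ * h = 1 := Matrix.nonsing_inv_mul h hdet
  have hinvh : h * h⁻¹ = 1 := Matrix.mul_nonsing_inv h hdet
  have hHinv : hᴴ⁻¹ * hᴴ = 1 := Matrix.nonsing_inv_mul _ hdetH
  have hinvH : hᴴ * hᴴ⁻¹ = 1 := Matrix.mul_nonsing_inv _ hdetH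
  have hKinv : (hᴴ * h)⁻¹ = h⁻¹ * hᴴ⁻¹ := Matrix.mul_inv_rev _ _
  set K : Matrix (Fin n) (Fin n) ℂ := hᴴ * h with hK
  have hKone : h * K⁻¹ * hᴴ = 1 := by
    rw [hKinv, show h * (h⁻¹ * hᴴ⁻¹) * hᴴ = (h * h⁻¹) * (hᴴ⁻¹ * hᴴ) by noncomm_ring,
      hinvh, hHinv, one_mul]
  have hKK : K * K⁻¹ = 1 := by
    rw [hK, hKinv, show (hᴴ * h) * (h⁻¹ * hᴴ⁻¹) = hᴴ * ((h * h⁻¹) * hᴴ⁻¹) by noncomm_ring,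
      hinvh, one_mul, hinvH]
  have hKK' : K⁻¹ * K = 1 := by
    rw [hK, hKinv, show (h⁻¹ * hᴴ⁻¹) * (hᴴ * h) = h⁻¹ * ((hᴴ⁻¹ * hᴴ) * h) by noncomm_ring,
      hHinv, one_mul, hhinv]
  constructor
  · intro hst
    have hρH : ρᴴ = ρ := hρ.1
    have hKH : Kᴴ = K := by
      rw [hK, Matrix.conjTranspose_mul, Matrix.conjTranspose_conjTranspose]
    set σ : Matrix (Fin n) (Fin n) ℂ := h * ρ * hᴴ with hσdef
    set B : Matrix (Fin n) (Fin n) ℂ := ρ * K with hB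
    set C : Matrix (Fin n) (Fin n) ℂ := K * ρ with hC
    have hσH : σ.IsHermitian := by
      rw [Matrix.IsHermitian, hσdef, Matrix.conjTranspose_mul, Matrix.conjTranspose_mul, hρH,
        Matrix.conjTranspose_conjTranspose]
      noncomm_ring
    have h0 : σ - (1/2:ℂ) • (C + B) = 0 := by
      rw [hσdef, hC, hB, hK]; exact hst
    have heq : B + C = (2:ℂ) • σ := by
      rw [sub_eq_zero] at h0
      rw [h0, smul_smul]
      norm_num [add_comm]
    have hBH : Bᴴ = C := by rw [hB, hC, Matrix.conjTranspose_mul, hρH, hKH]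
    have hCH : Cᴴ = B := by rw [← hBH, Matrix.conjTranspose_conjTranspose]
    have tB : (B * B).trace = (σ * σ).trace := by
      have e1 : σ * σ = h * (ρ * hᴴ * h * ρ * hᴴ) := by rw [hσdef]; noncomm_ring
      have e2 : B * B = (ρ * hᴴ * h * ρ * hᴴ) * h := by rw [hB, hK]; noncomm_ring
      rw [e1, e2]
      exact Matrix.trace_mul_comm _ _
    have tC : (C * C).trace = (σ * σ).trace := by
      have e1 : C * C = K * (ρ * (K * ρ)) := by rw [hC]; noncomm_ring
      have e2 : B * B = (ρ * (K * ρ)) * K := by rw [hB]; noncomm_ring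
      rw [e1, ← tB, e2]
      exact (Matrix.trace_mul_comm _ _).symm
    have tBC : (B * C).trace = (σ * σ).trace := by
      have hsq : ((B + C) * (B + C)).trace = (4:ℂ) * (σ * σ).trace := by
        rw [heq, smul_mul_smul_comm, Matrix.trace_smul]
        norm_num
      have hexp : ((B + C) * (B + C)).trace
          = (B * B).trace + (B * C).trace + (C * B).trace + (C * C).trace := by
        rw [show (B + C) * (B + C) = B * B + B * C + C * B + C * C by noncomm_ring]
        simp [Matrix.trace_add]
      have hcb : (C * B).trace = (B * C).trace := Matrix.trace_mul_comm C B
      rw [hexp, hcb, tB, tC] at hsq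
      have h5 : (2:ℂ) * (B * C).trace = (2:ℂ) * (σ * σ).trace := by linear_combination hsq
      exact mul_left_cancel₀ (by norm_num) h5
    have hBC : B = C := by
      have hD : ((B - C) * (B - C)ᴴ).trace = 0 := by
        rw [Matrix.conjTranspose_sub, hBH, hCH,
          show (B - C) * (C - B) = B * C - B * B - C * C + C * B by noncomm_ring,
          Matrix.trace_add, Matrix.trace_sub, Matrix.trace_sub, tB, tC, tBC,
          Matrix.trace_mul_comm C B, tBC]
        ring
      exact sub_eq_zero.mp (trace_mul_conjTranspose_self_eq_zero' hD)
    have hσB : σ = B := by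
      have h6 : (2:ℂ) • σ = (2:ℂ) • B := by
        rw [← heq, hBC, two_smul]
      exact smul_right_injective (Matrix (Fin n) (Fin n) ℂ) (two_ne_zero (α := ℂ)) h6
    have hcomm : h * σ = σ * h := by
      calc h * σ = h * (ρ * K) := by rw [hσB, hB]
        _ = (h * ρ * hᴴ) * h := by rw [hK]; noncomm_ring
        _ = σ * h := by rw [← hσdef]
    -- spectral theorem for σ
    set U : Matrix (Fin n) (Fin n) ℂ := (hσH.eigenvectorUnitary : Matrix (Fin n) (Fin n) ℂ)
      with hUdef
    have hUU : U * Uᴴ = 1 := by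
      rw [← Matrix.star_eq_conjTranspose]
      exact (Matrix.mem_unitaryGroup_iff).mp hσH.eigenvectorUnitary.2
    have hUU' : Uᴴ * U = 1 := by
      rw [← Matrix.star_eq_conjTranspose]
      exact (Matrix.mem_unitaryGroup_iff').mp hσH.eigenvectorUnitary.2
    set d : Fin n → ℂ := fun i => ((hσH.eigenvalues i : ℝ) : ℂ) with hd
    have hspec : σ = U * diagonal d * Uᴴ := by
      rw [← Matrix.star_eq_conjTranspose]
      exact hσH.spectral_theorem
    set lam : ℝ := hσH.eigenvalues ⟨0, hn⟩ with hlam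
    set e : Fin n → ℂ := fun i => if hσH.eigenvalues i = lam then (1:ℂ) else 0 with he
    have hestar : star e = e := by
      funext i
      rw [he]
      simp [apply_ite (star : ℂ → ℂ)]
    have he2 : ∀ i, e i * e i = e i := by
      intro i
      by_cases hi : hσH.eigenvalues i = lam <;> simp [he, hi]
    have hee : diagonal e * diagonal e = diagonal e := by
      rw [Matrix.diagonal_mul_diagonal]
      exact congrArg Matrix.diagonal (funext he2)
    set P : Matrix (Fin n) (Fin n) ℂ := U * diagonal e * Uᴴ with hP
    have hPH : P = Pᴴ := by
      rw [hP]
      simp [Matrix.conjTranspose_mul, Matrix.diagonal_conjTranspose, hestar, Matrix.mul_assoc]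
    have hPP : P * P = P := by
      rw [hP]
      calc (U * diagonal e * Uᴴ) * (U * diagonal e * Uᴴ)
          = U * (diagonal e * (Uᴴ * U) * diagonal e) * Uᴴ := by noncomm_ring
        _ = U * (diagonal e * diagonal e) * Uᴴ := by rw [hUU', mul_one]
        _ = U * diagonal e * Uᴴ := by rw [hee]
    set M : Matrix (Fin n) (Fin n) ℂ := Uᴴ * h * U with hMdef
    have hh : h = U * M * Uᴴ := by
      rw [hMdef]
      calc h = (U * Uᴴ) * h * (U * Uᴴ) := by rw [hUU]; noncomm_ring
        _ = U * (Uᴴ * h * U) * Uᴴ := by noncomm_ring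
    have e1 : Uᴴ * (σ * h) * U = diagonal d * M := by
      rw [hspec, hMdef]
      calc Uᴴ * ((U * diagonal d * Uᴴ) * h) * U
          = (Uᴴ * U) * (diagonal d * (Uᴴ * h * U)) := by noncomm_ring
        _ = diagonal d * (Uᴴ * h * U) := by rw [hUU', one_mul]
    have e2 : Uᴴ * (h * σ) * U = M * diagonal d := by
      rw [hspec, hMdef]
      calc Uᴴ * (h * (U * diagonal d * Uᴴ)) * U
          = ((Uᴴ * h * U) * diagonal d) * (Uᴴ * U) := by noncomm_ring
        _ = (Uᴴ * h * U) * diagonal d := by rw [hUU', mul_one]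
    have hMD : diagonal d * M = M * diagonal d := by
      rw [← e1, ← e2, hcomm]
    have hent : ∀ i j, d i * M i j = M i j * d j := by
      intro i j
      have h7 := congrFun (congrFun hMD i) j
      simpa [Matrix.diagonal_mul, Matrix.mul_diagonal] using h7
    have hME : diagonal e * M = M * diagonal e := by
      ext i j
      simp only [Matrix.diagonal_mul, Matrix.mul_diagonal]
      by_cases hij : hσH.eigenvalues i = hσH.eigenvalues j
      · have h8 : e i = e j := by rw [he]; simp only [hij]
        rw [h8, mul_comm]
      · have hdij : d i ≠ d j := by
          rw [hd]
          simpa [Complex.ofReal_inj] using hij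
        have h9 : (d i - d j) * M i j = 0 := by linear_combination hent i j
        have hM0 : M i j = 0 := by
          rcases mul_eq_zero.mp h9 with h10 | h10
          · exact absurd (sub_eq_zero.mp h10) hdij
          · exact h10
        simp [hM0]
    have hPh : P * h = h * P := by
      rw [hP, hh]
      calc (U * diagonal e * Uᴴ) * (U * M * Uᴴ)
          = U * (diagonal e * (Uᴴ * U) * M) * Uᴴ := by noncomm_ring
        _ = U * (diagonal e * M) * Uᴴ := by rw [hUU', mul_one]
        _ = U * (M * diagonal e) * Uᴴ := by rw [hME]
        _ = U * (M * (Uᴴ * U) * diagonal e) * Uᴴ := by rw [hUU', mul_one]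
        _ = (U * M * Uᴴ) * (U * diagonal e * Uᴴ) := by noncomm_ring
    have htrP : P.trace = (diagonal e).trace := by
      rw [hP]
      calc (U * diagonal e * Uᴴ).trace = (Uᴴ * (U * diagonal e)).trace :=
            Matrix.trace_mul_comm _ _
        _ = ((Uᴴ * U) * diagonal e).trace := by rw [Matrix.mul_assoc]
        _ = (diagonal e).trace := by rw [hUU', one_mul]
    have hPne : P ≠ 0 := by
      intro h0
      have h11 : (diagonal e).trace = 0 := by rw [← htrP, h0, Matrix.trace_zero]
      rw [Matrix.trace_diagonal] at h11
      have h12 : ∑ i, e i =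
          ((Finset.univ.filter (fun i => hσH.eigenvalues i = lam)).card : ℂ) := by
        simp only [he]
        exact Finset.sum_boole _ _
      rw [h12] at h11
      have h13 := Nat.cast_eq_zero.mp h11
      rw [Finset.card_eq_zero] at h13
      have h14 : (⟨0, hn⟩ : Fin n) ∈
          Finset.univ.filter (fun i => hσH.eigenvalues i = lam) := by
        simp [hlam]
      rw [h13] at h14
      exact absurd h14 (Finset.notMem_empty _)
    have hP1 : P = 1 := (hind P hPH hPP hPh).resolve_left hPne
    have hE1 : diagonal e = 1 := by
      calc diagonal e = (Uᴴ * U) * diagonal e * (Uᴴ * U) := by rw [hUU']; noncomm_ring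
        _ = Uᴴ * (U * diagonal e * Uᴴ) * U := by noncomm_ring
        _ = Uᴴ * 1 * U := by rw [← hP, hP1]
        _ = 1 := by rw [mul_one, hUU']
    have hdall : d = fun _ => ((lam : ℝ) : ℂ) := by
      funext i
      have h15 : e i = 1 := by
        have h16 := congrFun (congrFun hE1 i) i
        rwa [Matrix.diagonal_apply_eq, Matrix.one_apply_eq] at h16
      have hi : hσH.eigenvalues i = lam := by
        by_contra hi
        simp [he, hi] at h15
      simp [hd, hi]
    have hσlam : σ = ((lam : ℝ) : ℂ) • 1 := by
      rw [hspec, hdall]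
      have h16 : diagonal (fun _ : Fin n => ((lam : ℝ) : ℂ)) = ((lam : ℝ) : ℂ) • 1 := by
        ext i j
        by_cases hij : i = j <;>
          simp [Matrix.diagonal_apply, Matrix.one_apply, hij]
      rw [h16, Matrix.mul_smul, Matrix.smul_mul, mul_one, hUU]
    have hρeq : ρ = ((lam : ℝ) : ℂ) • K⁻¹ := by
      have h17 : h * ρ * hᴴ = ((lam : ℝ) : ℂ) • 1 := by rw [← hσdef]; exact hσlam
      calc ρ = h⁻¹ * (h * ρ * hᴴ) * hᴴ⁻¹ := by
            calc ρ = (h⁻¹ * h) * ρ * (hᴴ * hᴴ⁻¹) := by rw [hhinv, hinvH]; noncomm_ring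
              _ = h⁻¹ * (h * ρ * hᴴ) * hᴴ⁻¹ := by noncomm_ring
        _ = ((lam : ℝ) : ℂ) • (h⁻¹ * 1 * hᴴ⁻¹) := by
            rw [h17, Matrix.mul_smul, Matrix.smul_mul]
        _ = ((lam : ℝ) : ℂ) • K⁻¹ := by rw [mul_one, hKinv]
    have htrK : ((lam : ℝ) : ℂ) * K⁻¹.trace = 1 := by
      have h18 := htr
      rw [hρeq, Matrix.trace_smul, smul_eq_mul] at h18
      exact h18
    have hlaminv : ((lam : ℝ) : ℂ) = (K⁻¹.trace)⁻¹ := eq_inv_of_mul_eq_one_left htrK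
    rw [hρeq, hlaminv]
  · intro hρeq
    rw [hρeq]
    show h * (_ • K⁻¹) * hᴴ - (1 / 2 : ℂ) • (K * (_ • K⁻¹) + (_ • K⁻¹) * K) = 0
    rw [Matrix.mul_smul, Matrix.smul_mul, Matrix.mul_smul, Matrix.smul_mul,
      hKone, hKK, hKK']
    rw [smul_add, smul_smul, ← add_smul, ← sub_smul]
    convert zero_smul ℂ (1 : Matrix (Fin n) (Fin n) ℂ) using 2
    ring
end

section
/- (Decay: stationary states on the kernel.) Let h be an indecomposable n×n complex matrix with nontrivial kernel. Then a density matrix ρ satisfies D_h(ρ) = 0 if and only if hρ = 0, i.e. if and only if the range of ρ is contained in the kernel of h; the stationary states are exactly the states supported on the proper eigenspace of h to the eigenvalue zero. -/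
open Matrix
open scoped ComplexOrder

/-!
Let `P` be the support projection of `ρ` and `S` that of `hᴴ * h`, the projection onto
`(ker h)ᗮ`. Compressing `D_h(ρ) = 0` by `1 - P` or by `1 - S` kills the anticommutator term and
leaves `(X h) ρ (X h)ᴴ = 0`; hence `h` maps `ran ρ` into `W = ran ρ ⊓ (ker h)ᗮ`, and `ρ`
commutes with `S`. The block `(1 - P) D_h(ρ) P = 0` says `h (ran P) ⟂ h (ran P)ᗮ`. As `h` is
injective on `W`, finite dimension gives `h (ran P) = W`, so `W` reduces `h`. By
indecomposability either `W = 0`, i.e. `h ρ = 0`, or `W` is everything, so `ker h = 0`.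
-/

namespace Matrix

variable {𝕜 n : Type*} [RCLike 𝕜] [Fintype n]

lemma commute_of_mul_eq_mul_mul {E X : Matrix n n 𝕜} (hE : E.IsHermitian) (hX : X.IsHermitian)
    (h : X * E = E * X * E) : Commute E X := by
  have h' := congrArg conjTranspose h
  simp only [conjTranspose_mul, hE.eq, hX.eq, ← Matrix.mul_assoc] at h'
  exact h'.trans h.symm

variable [DecidableEq n]

/-- Since `0⁻¹ = 0`, `x * x⁻¹` is the indicator of `x ≠ 0`: this is the orthogonal projection
onto the range of a Hermitian `A`. -/
noncomputable def supportProj (A : Matrix n n 𝕜) : Matrix n n 𝕜 :=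
  cfc (fun x : ℝ => x * x⁻¹) A

variable {A : Matrix n n 𝕜}

lemma cfc_mul_cfc (f g : ℝ → ℝ) : cfc f A * cfc g A = cfc (fun x => f x * g x) A :=
  (cfc_mul f g A (A.finite_real_spectrum.continuousOn _)
    (A.finite_real_spectrum.continuousOn _)).symm

lemma supportProj_eq_mul_cfc_inv (hA : A.IsHermitian) :
    supportProj A = A * cfc (·⁻¹ : ℝ → ℝ) A := by
  conv_rhs => enter [1]; rw [← cfc_id' ℝ A hA.isSelfAdjoint]
  rw [cfc_mul_cfc, supportProj]

lemma supportProj_eq_cfc_inv_mul (hA : A.IsHermitian) :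
    supportProj A = cfc (·⁻¹ : ℝ → ℝ) A * A := by
  rw [supportProj_eq_mul_cfc_inv hA]
  exact ((Commute.refl A).cfc_real _).eq.symm

lemma isHermitian_supportProj : (supportProj A).IsHermitian :=
  cfc_predicate _ A

lemma supportProj_mul_supportProj :
    supportProj A * supportProj A = supportProj A := by
  rw [supportProj, cfc_mul_cfc]
  congr 1 with x
  rw [← mul_assoc, mul_inv_mul_cancel]

lemma self_mul_supportProj (hA : A.IsHermitian) : A * supportProj A = A := by
  conv_lhs => enter [1]; rw [← cfc_id' ℝ A hA.isSelfAdjoint]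
  rw [supportProj, cfc_mul_cfc]
  conv_rhs => rw [← cfc_id' ℝ A hA.isSelfAdjoint]
  congr 1 with x
  rw [← mul_assoc, mul_self_mul_inv]

lemma commute_supportProj {B : Matrix n n 𝕜} (h : Commute A B) : Commute (supportProj A) B :=
  h.cfc_real _

lemma supportProj_mul_self (hA : A.IsHermitian) : supportProj A * A = A := by
  rw [(commute_supportProj (Commute.refl A)).eq, self_mul_supportProj hA]

lemma mul_supportProj_eq_zero {m : Type*} {X : Matrix m n 𝕜} (hA : A.IsHermitian)
    (hX : X * A = 0) : X * supportProj A = 0 := by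
  rw [supportProj_eq_mul_cfc_inv hA, ← Matrix.mul_assoc, hX, Matrix.zero_mul]

lemma supportProj_mulVec_eq_zero {v : n → 𝕜} (hA : A.IsHermitian) (hv : A *ᵥ v = 0) :
    supportProj A *ᵥ v = 0 := by
  rw [supportProj_eq_cfc_inv_mul hA, ← mulVec_mulVec, hv, mulVec_zero]

lemma mul_supportProj_conjTranspose_mul_self {m : Type*} [Fintype m] (B : Matrix m n 𝕜) :
    B * supportProj (Bᴴ * B) = B := by
  have h : (Bᴴ * B) * (supportProj (Bᴴ * B) - 1) = 0 := by
    rw [Matrix.mul_sub, self_mul_supportProj (isHermitian_conjTranspose_mul_self B),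
      Matrix.mul_one, sub_self]
  rwa [conjTranspose_mul_self_mul_eq_zero, Matrix.mul_sub, Matrix.mul_one, sub_eq_zero] at h

lemma sub_supportProj_conjTranspose_mul_self_mul_conjTranspose {m : Type*} [Fintype m]
    (B : Matrix m n 𝕜) : (1 - supportProj (Bᴴ * B)) * Bᴴ = 0 := by
  have h := congrArg conjTranspose (mul_supportProj_conjTranspose_mul_self B)
  rw [conjTranspose_mul, isHermitian_supportProj.eq] at h
  rw [Matrix.sub_mul, h, Matrix.one_mul, sub_self]

lemma sub_supportProj_mul_self (hA : A.IsHermitian) : (1 - supportProj A) * A = 0 := by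
  rw [Matrix.sub_mul, supportProj_mul_self hA, Matrix.one_mul, sub_self]

lemma PosSemidef.mul_eq_zero_of_mul_mul_conjTranspose_eq_zero {m : Type*} [Fintype m]
    {X : Matrix m n 𝕜} (hA : A.PosSemidef) (hX : X * A * Xᴴ = 0) : X * A = 0 := by
  open scoped MatrixOrder in
  obtain ⟨s, hs, -, rfl⟩ : ∃ s : Matrix n n 𝕜, IsSelfAdjoint s ∧
      QuasispectrumRestricts s ContinuousMap.realToNNReal ∧ s * s = A :=
    CFC.exists_sqrt_of_isSelfAdjoint_of_quasispectrumRestricts hA.1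
      (QuasispectrumRestricts.nnreal_of_nonneg hA.nonneg)
  have hXs : (X * s) * (X * s)ᴴ = 0 := by
    have hs' : sᴴ = s := hs
    rwa [conjTranspose_mul, hs', ← Matrix.mul_assoc, Matrix.mul_assoc X]
  rw [← Matrix.mul_assoc, self_mul_conjTranspose_eq_zero.mp hXs, Matrix.zero_mul]

/-- In finite dimension `ker T ≤ ker R` and `ran T ≤ ran R` force `ran T = ran R`:
`T + 1 - R` is injective, hence invertible, and `R * (T + 1 - R) = T`. -/
lemma mul_eq_zero_of_mul_eq_zero_of_ker_le {m : Type*} [Fintype m] {T R : Matrix n n 𝕜}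
    {Y : Matrix m n 𝕜} (hRR : R * R = R) (hRT : R * T = T)
    (hker : ∀ v, T *ᵥ v = 0 → R *ᵥ v = 0) (hY : Y * T = 0) : Y * R = 0 := by
  have hRM : R * (T + 1 - R) = T := by
    rw [Matrix.mul_sub, Matrix.mul_add, hRT, hRR, Matrix.mul_one, add_sub_cancel_right]
  have hM : IsUnit (T + 1 - R).det := by
    refine isUnit_iff_ne_zero.mpr fun h0 => ?_
    obtain ⟨v, hv0, hv⟩ := exists_mulVec_eq_zero_iff.mpr h0
    have hTv : T *ᵥ v = 0 := by rw [← hRM, ← mulVec_mulVec, hv, mulVec_zero]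
    exact hv0 (by simpa [sub_mulVec, add_mulVec, hTv, hker v hTv] using hv)
  calc Y * R = Y * (R * (T + 1 - R)) * (T + 1 - R)⁻¹ := by
        rw [Matrix.mul_assoc, Matrix.mul_assoc, mul_nonsing_inv _ hM, Matrix.mul_one]
    _ = 0 := by rw [hRM, hY, Matrix.zero_mul]

/-- `S * P` projects onto `W = ran P ⊓ ran S`, where `ran S = (ker h)ᗮ`. If `h (ran P) ≤ W` and
`h (ran P) ⟂ h (ran P)ᗮ`, then `h (ran P) = W` by dimension, and `W` reduces `h`. -/
lemma commute_mul_of_invariant {h P S : Matrix n n 𝕜} (hP : P.IsHermitian) (hS : S.IsHermitian)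
    (hPP : P * P = P) (hSS : S * S = S) (hPS : Commute S P) (hhS : h * S = h)
    (hker : ∀ v, h *ᵥ v = 0 → S *ᵥ v = 0) (hinv : (1 - P) * h * P = 0)
    (hrange : (1 - S) * h * P = 0) (horth : (1 - P) * hᴴ * h * P = 0) :
    Commute (S * P) h := by
  have hRR : S * P * (S * P) = S * P :=
    (IsIdempotentElem.mul_of_commute hPS hSS hPP : _)
  have hhP : h * P = S * P * h * P := by
    linear_combination (norm := noncomm_ring) hrange + S * hinv
  have hhR : h * (S * P) = h * P := by
    linear_combination (norm := noncomm_ring) hhS * P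
  have hRhP : (1 - P) * hᴴ * (S * P) = 0 := by
    refine mul_eq_zero_of_mul_eq_zero_of_ker_le hRR (T := h * (S * P)) ?_ ?_ ?_
    · linear_combination (norm := noncomm_ring) S * P * hhR - hhP - hhR
    · intro v hv
      have := hker ((S * P) *ᵥ v) (by rwa [mulVec_mulVec])
      rwa [mulVec_mulVec, ← Matrix.mul_assoc, hSS] at this
    · rw [hhR, ← Matrix.mul_assoc, horth]
  have hRh : S * P * h * (1 - P) = 0 := by
    have := congrArg conjTranspose hRhP
    simpa only [Matrix.mul_assoc, conjTranspose_mul, hP.eq, hS.eq, ← hPS.eq,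
      conjTranspose_conjTranspose, conjTranspose_sub, conjTranspose_one, conjTranspose_zero]
      using this
  show S * P * h = h * (S * P)
  linear_combination (norm := noncomm_ring) hRh - hhP - hhR

end Matrix

lemma lindblad_eq_zero_of_mul_eq_zero {n : ℕ} {h ρ : Matrix (Fin n) (Fin n) ℂ}
    (hρ : ρ.IsHermitian) (h0 : h * ρ = 0) : lindblad h ρ = 0 := by
  have h0' : ρ * hᴴ = 0 := by
    simpa only [conjTranspose_mul, hρ.eq, conjTranspose_zero] using congrArg conjTranspose h0
  rw [lindblad, h0, Matrix.mul_assoc hᴴ, h0, ← Matrix.mul_assoc ρ, h0']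
  simp

namespace Lindblad

variable {n : ℕ} {m : Type*} [Fintype m] {h ρ : Matrix (Fin n) (Fin n) ℂ} {X : Matrix m (Fin n) ℂ}

lemma mul_mul_eq_zero (hρ : ρ.PosSemidef) (hD : lindblad h ρ = 0)
    (hX : X * (hᴴ * h) * ρ * Xᴴ = 0) : X * h * ρ = 0 := by
  refine hρ.mul_eq_zero_of_mul_mul_conjTranspose_eq_zero ?_
  have hX' : X * ρ * (hᴴ * h) * Xᴴ = 0 := by
    simpa only [conjTranspose_mul, conjTranspose_conjTranspose, hρ.1.eq, conjTranspose_zero,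
      (isHermitian_conjTranspose_mul_self h).eq, Matrix.mul_assoc] using congrArg conjTranspose hX
  have hD' := congrArg (fun M => X * M * Xᴴ) (sub_eq_zero.mp hD)
  simp only [Matrix.mul_add, Matrix.add_mul, Matrix.mul_smul, Matrix.smul_mul] at hD'
  simp only [conjTranspose_mul, ← Matrix.mul_assoc] at hD' hX hX' ⊢
  rw [hD', hX, hX', add_zero, smul_zero]

lemma mul_mul_eq_zero_of_mul_eq_zero (hρ : ρ.PosSemidef) (hD : lindblad h ρ = 0)
    (hX : X * ρ = 0) : X * h * ρ = 0 := by
  refine mul_mul_eq_zero hρ hD ?_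
  have hX' : ρ * Xᴴ = 0 := by
    simpa only [conjTranspose_mul, hρ.1.eq, conjTranspose_zero] using congrArg conjTranspose hX
  rw [Matrix.mul_assoc, hX', Matrix.mul_zero]

lemma mul_mul_eq_zero_of_mul_conjTranspose_eq_zero (hρ : ρ.PosSemidef) (hD : lindblad h ρ = 0)
    (hX : X * hᴴ = 0) : X * h * ρ = 0 :=
  mul_mul_eq_zero hρ hD (by rw [← Matrix.mul_assoc X, hX]; simp)

lemma mul_conjTranspose_mul_self_mul_eq_zero (hρ : ρ.PosSemidef) (hD : lindblad h ρ = 0)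
    (hX : X * ρ = 0) : X * (hᴴ * h) * ρ = 0 := by
  have hD' := congrArg (X * ·) (sub_eq_zero.mp hD)
  simp only [Matrix.mul_add, Matrix.mul_smul, ← Matrix.mul_assoc, hX,
    mul_mul_eq_zero_of_mul_eq_zero hρ hD hX, Matrix.zero_mul, add_zero] at hD' ⊢
  exact (smul_eq_zero.mp hD'.symm).resolve_left (by norm_num)

lemma mul_mul_conjTranspose_mul_self_eq_zero (hρ : ρ.PosSemidef) (hD : lindblad h ρ = 0)
    (hX : X * hᴴ = 0) : X * ρ * (hᴴ * h) = 0 := by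
  have hD' := congrArg (X * ·) (sub_eq_zero.mp hD)
  simp only [Matrix.mul_add, Matrix.mul_smul, ← Matrix.mul_assoc, hX,
    mul_mul_eq_zero_of_mul_conjTranspose_eq_zero hρ hD hX, Matrix.zero_mul, zero_add] at hD' ⊢
  exact (smul_eq_zero.mp hD'.symm).resolve_left (by norm_num)

lemma commute_supportProj (hρ : ρ.PosSemidef) (hD : lindblad h ρ = 0) :
    Commute (supportProj (hᴴ * h)) ρ := by
  have h0 : (1 - supportProj (hᴴ * h)) * ρ * supportProj (hᴴ * h) = 0 :=
    mul_supportProj_eq_zero (isHermitian_conjTranspose_mul_self h)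
      (mul_mul_conjTranspose_mul_self_eq_zero hρ hD
        (sub_supportProj_conjTranspose_mul_self_mul_conjTranspose h))
  refine commute_of_mul_eq_mul_mul isHermitian_supportProj hρ.1 ?_
  linear_combination (norm := noncomm_ring) h0

lemma commute_mul_supportProj (hρ : ρ.PosSemidef) (hD : lindblad h ρ = 0) :
    Commute (supportProj (hᴴ * h) * supportProj ρ) h := by
  have hQ := sub_supportProj_mul_self hρ.1
  have hK := sub_supportProj_conjTranspose_mul_self_mul_conjTranspose h
  refine commute_mul_of_invariant isHermitian_supportProj isHermitian_supportProj
    supportProj_mul_supportProj supportProj_mul_supportProj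
    (Matrix.commute_supportProj (commute_supportProj hρ hD).symm).symm
    (mul_supportProj_conjTranspose_mul_self h) (fun v hv => ?_)
    (mul_supportProj_eq_zero hρ.1 (mul_mul_eq_zero_of_mul_eq_zero hρ hD hQ))
    (mul_supportProj_eq_zero hρ.1 (mul_mul_eq_zero_of_mul_conjTranspose_eq_zero hρ hD hK)) ?_
  · exact supportProj_mulVec_eq_zero (isHermitian_conjTranspose_mul_self h)
      (by rw [← mulVec_mulVec, hv, mulVec_zero])
  · simpa only [Matrix.mul_assoc] using
      mul_supportProj_eq_zero hρ.1 (mul_conjTranspose_mul_self_mul_eq_zero hρ hD hQ)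

end Lindblad

theorem stmt11_general {n : ℕ} (h : Matrix (Fin n) (Fin n) ℂ)
    (hind : Indecomposable h)
    (hker : ∃ v : Fin n → ℂ, v ≠ 0 ∧ h.mulVec v = 0)
    (ρ : Matrix (Fin n) (Fin n) ℂ) (hρ : ρ.PosSemidef) :
    lindblad h ρ = 0 ↔ h * ρ = 0 := by
  refine ⟨fun hD => ?_, lindblad_eq_zero_of_mul_eq_zero hρ.1⟩
  set S := supportProj (hᴴ * h)
  set P := supportProj ρ
  have hSP : Commute S P := (commute_supportProj (Lindblad.commute_supportProj hρ hD).symm).symm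
  rcases hind (S * P) ((isHermitian_supportProj.commute_iff isHermitian_supportProj).mp hSP).symm
    (IsIdempotentElem.mul_of_commute hSP supportProj_mul_supportProj supportProj_mul_supportProj)
    (Lindblad.commute_mul_supportProj hρ hD).eq with h0 | h1
  · calc h * ρ = h * (S * P) * ρ := by
          rw [Matrix.mul_assoc, Matrix.mul_assoc, supportProj_mul_self hρ.1, ← Matrix.mul_assoc,
            mul_supportProj_conjTranspose_mul_self]
      _ = 0 := by rw [h0, Matrix.mul_zero, Matrix.zero_mul]
  · obtain ⟨v, hv0, hv⟩ := hker
    have hS1 : S = 1 := calc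
      S = S * (S * P) := by rw [h1, Matrix.mul_one]
      _ = 1 := by rw [← Matrix.mul_assoc, supportProj_mul_supportProj, h1]
    have hSv : S *ᵥ v = 0 := supportProj_mulVec_eq_zero (isHermitian_conjTranspose_mul_self h)
      (by rw [← mulVec_mulVec, hv, mulVec_zero])
    exact absurd (by rwa [hS1, one_mulVec] at hSv) hv0

/-- Decay: the stationary states are exactly the states supported on `ker h`. -/
theorem stmt11 {n : ℕ} (h : Matrix (Fin n) (Fin n) ℂ)
    (hind : Indecomposable h)
    (hker : ∃ v : Fin n → ℂ, v ≠ 0 ∧ h.mulVec v = 0)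
    (ρ : Matrix (Fin n) (Fin n) ℂ) (hρ : ρ.PosSemidef) (htr : ρ.trace = 1) :
    lindblad h ρ = 0 ↔ h * ρ = 0 :=
  stmt11_general h hind hker ρ hρ
end

section
/- (Elementary dephasing.) Let h be a normal n×n complex matrix (h h† = h† h). Then a density matrix ρ satisfies D_h(ρ) = 0 if and only if ρ commutes with h: the set of stationary states is exactly the set of density matrices commuting with h. -/
open Matrix
open scoped ComplexOrder

theorem Matrix.IsHermitian.conjTranspose_mul_comm {m α : Type*} [Fintype m]
    [NonUnitalSemiring α] [StarRing α] {A B : Matrix m m α} (hA : A.IsHermitian)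
    (hAB : B * A = A * B) : Bᴴ * A = A * Bᴴ := by
  simpa only [conjTranspose_mul, hA.eq] using (congrArg (·ᴴ) hAB).symm

variable {n : ℕ} {h ρ : Matrix (Fin n) (Fin n) ℂ}

theorem lindblad_eq_zero_of_mul_comm (hnormal : h * hᴴ = hᴴ * h) (hρ : ρ.IsHermitian)
    (hc : h * ρ = ρ * h) : lindblad h ρ = 0 := by
  have hc' : hᴴ * ρ = ρ * hᴴ := hρ.conjTranspose_mul_comm hc
  have sandwich : h * ρ * hᴴ = ρ * (hᴴ * h) := by rw [hc, mul_assoc, hnormal]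
  have left : hᴴ * h * ρ = ρ * (hᴴ * h) := by
    rw [mul_assoc, hc, ← mul_assoc, hc', mul_assoc]
  rw [lindblad, sandwich, left]
  module

theorem trace_commutator_conjTranspose_mul_self (hnormal : h * hᴴ = hᴴ * h)
    (hρ : ρ.IsHermitian) :
    ((h * ρ - ρ * h)ᴴ * (h * ρ - ρ * h)).trace = -2 * (lindblad h ρ * ρ).trace := by
  have hC : (h * ρ - ρ * h)ᴴ = ρ * hᴴ - hᴴ * ρ := by
    rw [conjTranspose_sub, conjTranspose_mul, conjTranspose_mul, hρ.eq]
  have t₁ : (ρ * hᴴ * (h * ρ)).trace = (hᴴ * h * (ρ * ρ)).trace := by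
    simp only [mul_assoc]; rw [trace_mul_comm ρ]; simp only [mul_assoc]
  have t₂ : (ρ * hᴴ * (ρ * h)).trace = (h * ρ * hᴴ * ρ).trace := by
    simp only [mul_assoc]; rw [trace_mul_comm h]; simp only [mul_assoc]
  have t₃ : (hᴴ * ρ * (h * ρ)).trace = (h * ρ * hᴴ * ρ).trace := by
    simp only [mul_assoc]; rw [trace_mul_comm hᴴ]; simp only [mul_assoc]
    rw [trace_mul_comm ρ]; simp only [mul_assoc]
  have t₄ : (hᴴ * ρ * (ρ * h)).trace = (hᴴ * h * (ρ * ρ)).trace := by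
    rw [← hnormal]; simp only [mul_assoc]; rw [trace_mul_comm h]; simp only [mul_assoc]
  have t₅ : (ρ * (hᴴ * h) * ρ).trace = (hᴴ * h * (ρ * ρ)).trace := by
    simp only [mul_assoc]; rw [trace_mul_comm ρ]; simp only [mul_assoc]
  rw [hC, lindblad]
  simp only [sub_mul, mul_sub, add_mul, smul_mul_assoc, trace_sub, trace_add, trace_smul,
    t₁, t₂, t₃, t₄, t₅]
  rw [mul_assoc (hᴴ * h) ρ ρ, smul_eq_mul]
  ring

theorem stmt13_general {n : ℕ} (h : Matrix (Fin n) (Fin n) ℂ)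
    (hnormal : h * hᴴ = hᴴ * h)
    (ρ : Matrix (Fin n) (Fin n) ℂ) (hρ : ρ.PosSemidef) :
    lindblad h ρ = 0 ↔ h * ρ = ρ * h := by
  refine ⟨fun hD => ?_, lindblad_eq_zero_of_mul_comm hnormal hρ.1⟩
  have hC := trace_commutator_conjTranspose_mul_self hnormal hρ.1
  rw [hD, zero_mul, trace_zero, mul_zero, trace_conjTranspose_mul_self_eq_zero_iff] at hC
  exact sub_eq_zero.mp hC

/-- Elementary dephasing: for normal `h`, the stationary states are exactly the
density matrices commuting with `h`. -/
theorem stmt13 {n : ℕ} (h : Matrix (Fin n) (Fin n) ℂ)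
    (hnormal : h * hᴴ = hᴴ * h)
    (ρ : Matrix (Fin n) (Fin n) ℂ) (hρ : ρ.PosSemidef) (htr : ρ.trace = 1) :
    lindblad h ρ = 0 ↔ h * ρ = ρ * h :=
  stmt13_general h hnormal ρ hρ
end

section
/- (No stationary phase relations between inequivalent invertible parts.) Let h be an invertible n×n complex matrix and let P be an orthogonal projection with 0 ≠ P ≠ 𝟙 and Ph = hP. Assume that the only orthogonal projections commuting with h are 0, P, 𝟙−P and 𝟙 (i.e. the two diagonal parts of h are indecomposable and not unitarily equivalent). Then every density matrix ρ with D_h(ρ) = 0 satisfies P ρ (𝟙−P) = 0: there are no stationary phase relations between the two subspaces. -/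
/-!
Let `Q = 1 - P` and let `C = PρQ + QρP` be the off-diagonal part of `ρ`. As `P` commutes with
`h` and `hᴴ`, `C` is stationary as well; it is traceless, hence not positive unless it vanishes.
Moving from `ρ` along `C` until the positive cone is left produces a stationary state
`σ = ρ + tC ≥ 0` that is not invertible. The range of a stationary state is invariant under `h`
and `hᴴh`; as `h` is invertible it then maps the range onto itself, and so does `hᴴ`, so the
support projection of `σ` commutes with `h`. It is therefore `0`, `P`, `Q` or `1`. It is not `1`,
and otherwise a diagonal block `PρP` or `QρQ` of `ρ` vanishes, which for `ρ ≥ 0` forces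
`PρQ = 0`.
-/

open Matrix
open scoped ComplexOrder

section CStarAlgebra

open Filter Topology

variable {A : Type*} [CStarAlgebra A] [PartialOrder A] [StarOrderedRing A]

lemma IsStrictlyPositive.exists_pos_nonneg_add_smul {a c : A} (ha : IsStrictlyPositive a)
    (hc : IsSelfAdjoint c) : ∃ ε : ℝ, 0 < ε ∧ 0 ≤ a + ε • c := by
  rcases subsingleton_or_nontrivial A with _ | _
  · exact ⟨1, one_pos, (Subsingleton.elim 0 (a + (1 : ℝ) • c)).le⟩
  obtain ⟨r, hr, hra⟩ : ∃ r > 0, algebraMap ℝ A r ≤ a :=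
    (CFC.exists_pos_algebraMap_le_iff ha.isSelfAdjoint).2 fun x hx ↦ ha.spectrum_pos hx
  set ε := r / (‖c‖ + 1)
  have hε : 0 < ε := by positivity
  have hεc : ε * ‖c‖ ≤ r := by
    rw [div_mul_eq_mul_div, div_le_iff₀ (by positivity)]
    nlinarith [norm_nonneg c]
  have hlower : -algebraMap ℝ A (ε * ‖c‖) ≤ ε • c := by
    rw [map_mul, ← Algebra.smul_def, ← smul_neg]
    exact smul_le_smul_of_nonneg_left hc.neg_algebraMap_norm_le_self hε.le
  refine ⟨ε, hε, ?_⟩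
  calc (0 : A) = algebraMap ℝ A (ε * ‖c‖) + -algebraMap ℝ A (ε * ‖c‖) := by abel
    _ ≤ a + ε • c := add_le_add ((algebraMap_le_algebraMap.mpr hεc).trans hra) hlower

lemma exists_nonneg_add_smul_not_isUnit {a c : A} (ha : 0 ≤ a) (hc : IsSelfAdjoint c)
    (hc' : ¬ 0 ≤ c) : ∃ t : ℝ, 0 ≤ a + t • c ∧ ¬ IsUnit (a + t • c) := by
  set S := {t : ℝ | 0 ≤ t ∧ 0 ≤ a + t • c}
  have hS0 : (0 : ℝ) ∈ S := ⟨le_rfl, by simpa using ha⟩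
  have hclosed : IsClosed S := isClosed_Ici.inter (isClosed_Ici.preimage (by fun_prop))
  have hbdd : BddAbove S := by
    by_contra hS
    have : (atTop ⊓ 𝓟 S).NeBot := by
      refine inf_principal_neBot_iff.mpr fun U hU ↦ ?_
      obtain ⟨N, hN⟩ := mem_atTop_sets.mp hU
      obtain ⟨t, htS, hNt⟩ := not_bddAbove_iff.mp hS N
      exact ⟨t, hN t hNt.le, htS⟩
    -- `t⁻¹ • a + c ≥ 0` for large `t ∈ S`, and it tends to `c`
    have hlim : Tendsto (fun t : ℝ ↦ t⁻¹ • a + c) (atTop ⊓ 𝓟 S) (𝓝 c) := by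
      simpa using (((tendsto_inv_atTop_zero (𝕜 := ℝ)).smul_const a).add_const c).mono_left
        inf_le_left
    refine hc' (isClosed_Ici.mem_of_tendsto hlim ?_)
    filter_upwards [inf_le_left (a := atTop) (b := 𝓟 S) (Ioi_mem_atTop 0),
      inf_le_right (a := atTop) (b := 𝓟 S) (mem_principal_self S)] with t ht htS
    have := smul_nonneg (inv_nonneg.2 htS.1) htS.2
    rwa [smul_add, smul_smul, inv_mul_cancel₀ ht.ne', one_smul] at this
  have ht : sSup S ∈ S := hclosed.csSup_mem ⟨0, hS0⟩ hbdd
  refine ⟨sSup S, ht.2, fun hu ↦ ?_⟩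
  obtain ⟨ε, hε, hεc⟩ := (hu.isStrictlyPositive ht.2).exists_pos_nonneg_add_smul hc
  have : sSup S + ε ∈ S := ⟨by linarith [ht.1], by rwa [add_smul, ← add_assoc]⟩
  linarith [le_csSup hbdd this]

lemma mul_eq_zero_of_mul_mul_star_eq_zero {a b : A} (ha : 0 ≤ a) (h : b * a * star b = 0) :
    b * a = 0 := by
  obtain ⟨r, rfl⟩ := CStarAlgebra.nonneg_iff_eq_star_mul_self.mp ha
  have : b * star r = 0 := by
    rw [← CStarRing.mul_star_self_eq_zero_iff, star_mul, star_star, ← h]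
    simp only [mul_assoc]
  rw [← mul_assoc, this, zero_mul]

end CStarAlgebra

section Ring

variable {R : Type*} [Ring R]

lemma one_sub_mul_mul_eq_zero_iff {e a : R} : (1 - e) * a * e = 0 ↔ a * e = e * a * e := by
  rw [← sub_eq_zero (a := a * e)]
  constructor <;> intro h <;> rw [← h] <;> noncomm_ring

variable [IsDedekindFiniteMonoid R]

lemma IsIdempotentElem.one_sub_mul_inv_mul_eq_zero {e : R} (he : IsIdempotentElem e) {u : Rˣ}
    (hu : (1 - e) * u * e = 0) : (1 - e) * ↑u⁻¹ * e = 0 := by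
  have hue : (u : R) * e = e * u * e := one_sub_mul_mul_eq_zero_iff.mp hu
  have hef : e * (1 - e) = 0 := by rw [mul_sub, mul_one, he.eq, sub_self]
  have hfe : (1 - e) * e = 0 := by rw [sub_mul, one_mul, he.eq, sub_self]
  set x := e * ↑u⁻¹ * e
  have hxu : x * (u * e) = e := by
    calc x * (u * e) = e * ↑u⁻¹ * (e * u * e) := by simp only [x, mul_assoc]
      _ = e := by rw [← hue, mul_assoc e, u.inv_mul_cancel_left, he.eq]
  -- `x + (1 - e)` is a left inverse of `u * e + (1 - e)`, hence also a right inverse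
  have hone : (x + (1 - e)) * (u * e + (1 - e)) = 1 := by
    have hxf : x * (1 - e) = 0 := by simp only [x, mul_assoc, hef, mul_zero]
    have hfu : (1 - e) * (u * e) = 0 := by rw [← mul_assoc, hu]
    rw [add_mul, mul_add, mul_add, hxu, hxf, hfu, he.one_sub.eq]
    abel
  have hux : u * e * x = e := by
    have hxe : x * e = x := by simp only [x, mul_assoc, he.eq]
    have hfx : (1 - e) * x = 0 := by simp only [x, ← mul_assoc, hfe, zero_mul]
    have := congrArg (· * e) (mul_eq_one_comm.mp hone)
    simpa only [add_mul, mul_add, mul_assoc, hxe, hfe, hfx, mul_zero, add_zero, he.one_sub.eq,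
      one_mul] using this
  calc (1 - e) * ↑u⁻¹ * e = (1 - e) * ↑u⁻¹ * (u * e * x) := by rw [hux]
    _ = (1 - e) * e * x := by simp only [mul_assoc, u.inv_mul_cancel_left]
    _ = 0 := by rw [hfe, zero_mul]

lemma IsStarProjection.commute_of_one_sub_mul_mul_eq_zero [StarRing R] {p : R}
    (hp : IsStarProjection p) {u : Rˣ} (hu : (1 - p) * u * p = 0)
    (hu' : (1 - p) * (star ↑u * ↑u) * p = 0) : Commute p u := by
  have hinv : ↑u⁻¹ * p = p * ↑u⁻¹ * p :=
    one_sub_mul_mul_eq_zero_iff.mp (hp.isIdempotentElem.one_sub_mul_inv_mul_eq_zero hu)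
  have hstar : (1 - p) * star ↑u * p = 0 := by
    calc (1 - p) * star ↑u * p = (1 - p) * star ↑u * (↑u * (↑u⁻¹ * p)) := by
          rw [u.mul_inv_cancel_left]
      _ = (1 - p) * (star ↑u * ↑u) * p * (↑u⁻¹ * p) := by
          nth_rw 1 [hinv]
          simp only [mul_assoc]
      _ = 0 := by rw [hu', zero_mul]
  have hright : p * u * (1 - p) = 0 := by
    simpa [star_mul, hp.isSelfAdjoint.star_eq, mul_assoc] using congrArg star hstar
  calc p * u = p * u * p + p * u * (1 - p) := by noncomm_ring
    _ = u * p := by rw [hright, add_zero, one_sub_mul_mul_eq_zero_iff.mp hu]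

end Ring

section Matrix

variable {m 𝕜 : Type*} [Fintype m] [DecidableEq m] [RCLike 𝕜]

lemma Matrix.IsHermitian.exists_isStarProjection_mul_eq_self {σ : Matrix m m 𝕜}
    (hσ : σ.IsHermitian) : ∃ S, IsStarProjection S ∧ σ * S = σ ∧ ∃ X, S = σ * X := by
  have hσ : IsSelfAdjoint σ := hσ
  have hcont (f : ℝ → ℝ) : ContinuousOn f (spectrum ℝ σ) :=
    σ.finite_real_spectrum.continuousOn f
  -- as `0⁻¹ = 0`, `x * x⁻¹` is the indicator of `x ≠ 0`: `S` projects onto the range of `σ`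
  refine ⟨cfc (fun x : ℝ ↦ x * x⁻¹) σ, ⟨?_, cfc_predicate _ _⟩, ?_, cfc (·⁻¹ : ℝ → ℝ) σ, ?_⟩
  · rw [IsIdempotentElem, ← cfc_mul _ _ σ (hcont _) (hcont _)]
    congr 1 with x
    by_cases hx : x = 0 <;> simp [hx]
  · nth_rw 1 [← cfc_id ℝ σ]
    rw [← cfc_mul _ _ σ (hcont _) (hcont _)]
    nth_rw 2 [← cfc_id ℝ σ]
    congr 1 with x
    by_cases hx : x = 0 <;> simp [hx]
  · nth_rw 2 [← cfc_id ℝ σ]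
    rw [← cfc_mul _ _ σ (hcont _) (hcont _)]
    rfl

open scoped MatrixOrder Matrix.Norms.L2Operator

namespace Matrix.PosSemidef

lemma exists_posSemidef_add_smul_not_isUnit {ρ C : Matrix m m ℂ} (hρ : ρ.PosSemidef)
    (hC : C.IsHermitian) (hC' : ¬ C.PosSemidef) :
    ∃ t : ℝ, (ρ + t • C).PosSemidef ∧ ¬ IsUnit (ρ + t • C) := by
  obtain ⟨t, ht, hu⟩ :=
    exists_nonneg_add_smul_not_isUnit hρ.nonneg hC.isSelfAdjoint (mt LE.le.posSemidef hC')
  exact ⟨t, ht.posSemidef, hu⟩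

lemma mul_eq_zero_of_mul_mul_conjTranspose_eq_zero_s14 {A B : Matrix m m ℂ} (hA : A.PosSemidef)
    (h : B * A * Bᴴ = 0) : B * A = 0 :=
  mul_eq_zero_of_mul_mul_star_eq_zero hA.nonneg h

end Matrix.PosSemidef

end Matrix

section Lindblad

variable {n : ℕ} {h : Matrix (Fin n) (Fin n) ℂ}

lemma lindblad_add (A B : Matrix (Fin n) (Fin n) ℂ) :
    lindblad h (A + B) = lindblad h A + lindblad h B := by
  simp only [lindblad, Matrix.mul_add, Matrix.add_mul, smul_add]
  abel

lemma lindblad_smul (t : ℝ) (A : Matrix (Fin n) (Fin n) ℂ) :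
    lindblad h (t • A) = t • lindblad h A := by
  simp only [lindblad, Matrix.mul_smul, Matrix.smul_mul, smul_sub, smul_add, smul_comm t]

lemma lindblad_mul_mul_of_commute {E F : Matrix (Fin n) (Fin n) ℂ} (hE : Commute E h)
    (hE' : Commute E hᴴ) (hF : Commute F h) (hF' : Commute F hᴴ)
    (A : Matrix (Fin n) (Fin n) ℂ) :
    lindblad h (E * A * F) = E * lindblad h A * F := by
  have hsand : h * (E * A * F) * hᴴ = E * (h * A * hᴴ) * F := by
    simp only [mul_assoc, hF'.eq]
    simp only [← mul_assoc, ← hE.eq]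
  have hleft : hᴴ * h * (E * A * F) = E * (hᴴ * h * A) * F := by
    simp only [← mul_assoc, ← (hE'.mul_right hE).eq]
  have hright : E * A * F * (hᴴ * h) = E * (A * (hᴴ * h)) * F := by
    simp only [mul_assoc, (hF'.mul_right hF).eq]
  rw [lindblad, lindblad, hsand, hleft, hright]
  simp only [Matrix.mul_sub, Matrix.sub_mul, Matrix.mul_add, Matrix.add_mul, Matrix.mul_smul,
    Matrix.smul_mul]

lemma one_sub_mul_mul_eq_zero_of_lindblad_eq_zero {σ S X : Matrix (Fin n) (Fin n) ℂ}
    (hσ : σ.PosSemidef) (hstat : lindblad h σ = 0) (hS : IsStarProjection S)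
    (hσS : σ * S = σ) (hSX : S = σ * X) :
    (1 - S) * h * S = 0 ∧ (1 - S) * (hᴴ * h) * S = 0 := by
  have hSσ : S * σ = σ := by
    have hSH : Sᴴ = S := hS.isSelfAdjoint
    simpa [hσ.isHermitian.eq, hSH] using congrArg conjTranspose hσS
  have hσT : σ * (1 - S) = 0 := by rw [mul_sub, mul_one, hσS, sub_self]
  have hTσ : (1 - S) * σ = 0 := by rw [sub_mul, one_mul, hSσ, sub_self]
  have hann {B : Matrix (Fin n) (Fin n) ℂ} (hB : B * σ = 0) : B * S = 0 := by
    rw [hSX, ← mul_assoc, hB, zero_mul]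
  have hst : h * σ * hᴴ = (1 / 2 : ℂ) • (hᴴ * h * σ + σ * (hᴴ * h))  := sub_eq_zero.mp hstat
  have hThσ : (1 - S) * h * σ = 0 := by
    refine hσ.mul_eq_zero_of_mul_mul_conjTranspose_eq_zero_s14 ?_
    have hTH : (1 - S)ᴴ = 1 - S := hS.one_sub.isSelfAdjoint
    calc (1 - S) * h * σ * ((1 - S) * h)ᴴ = (1 - S) * (h * σ * hᴴ) * (1 - S) := by
          simp only [conjTranspose_mul, hTH, mul_assoc]
      _ = 0 := by
          simp only [hst, Matrix.mul_smul, Matrix.smul_mul, Matrix.mul_add, ← mul_assoc, hTσ,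
            zero_mul, add_zero]
          simp only [mul_assoc, hσT, mul_zero, smul_zero]
  refine ⟨hann hThσ, hann ?_⟩
  have : (1 / 2 : ℂ) • ((1 - S) * (hᴴ * h) * σ) = (1 - S) * h * σ * hᴴ := by
    simp only [mul_assoc, hst, Matrix.mul_smul, Matrix.mul_add]
    simp only [← mul_assoc, hTσ, zero_mul, add_zero]
  rwa [hThσ, zero_mul, smul_eq_zero_iff_right (by norm_num)] at this

lemma commute_of_lindblad_eq_zero {σ S X : Matrix (Fin n) (Fin n) ℂ} (hh : IsUnit h)
    (hσ : σ.PosSemidef) (hstat : lindblad h σ = 0) (hS : IsStarProjection S)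
    (hσS : σ * S = σ) (hSX : S = σ * X) : Commute S h := by
  obtain ⟨u, rfl⟩ := hh
  obtain ⟨hinv, hinv'⟩ := one_sub_mul_mul_eq_zero_of_lindblad_eq_zero hσ hstat hS hσS hSX
  exact hS.commute_of_one_sub_mul_mul_eq_zero hinv hinv'

end Lindblad

section OffDiagonal

variable {R : Type*} [Ring R]

def offDiagonalPart (p a : R) : R := p * a * (1 - p) + (1 - p) * a * p

lemma offDiagonalPart_one_sub (p a : R) : offDiagonalPart (1 - p) a = offDiagonalPart p a := by
  rw [offDiagonalPart, offDiagonalPart, sub_sub_cancel, add_comm]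

lemma IsIdempotentElem.mul_offDiagonalPart_mul_self {p : R} (hp : IsIdempotentElem p) (a : R) :
    p * offDiagonalPart p a * p = 0 := by
  have hpq : p * (1 - p) = 0 := by rw [mul_sub, mul_one, hp.eq, sub_self]
  have hqp : (1 - p) * p = 0 := by rw [sub_mul, one_mul, hp.eq, sub_self]
  have h1 : p * (p * a * (1 - p)) * p = 0 := by simp only [mul_assoc, hqp, mul_zero]
  have h2 : p * ((1 - p) * a * p) * p = 0 := by simp only [← mul_assoc, hpq, zero_mul]
  rw [offDiagonalPart, mul_add, add_mul, h1, h2, add_zero]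

lemma IsIdempotentElem.mul_offDiagonalPart_mul_one_sub {p : R} (hp : IsIdempotentElem p)
    (a : R) : p * offDiagonalPart p a * (1 - p) = p * a * (1 - p) := by
  have hpq : p * (1 - p) = 0 := by rw [mul_sub, mul_one, hp.eq, sub_self]
  simp only [offDiagonalPart, mul_add, add_mul, mul_assoc, hpq, mul_zero, add_zero,
    hp.one_sub.eq]
  simp only [← mul_assoc, hp.eq]

lemma IsSelfAdjoint.offDiagonalPart [StarRing R] {p a : R} (hp : IsSelfAdjoint p)
    (ha : IsSelfAdjoint a) : IsSelfAdjoint (offDiagonalPart p a) := by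
  simp only [IsSelfAdjoint, _root_.offDiagonalPart, star_add, star_mul, star_sub, star_one,
    hp.star_eq, ha.star_eq, mul_assoc, add_comm]

end OffDiagonal

section MatrixOffDiagonal

variable {n : ℕ}

lemma trace_offDiagonalPart {P : Matrix (Fin n) (Fin n) ℂ} (hP : IsIdempotentElem P)
    (ρ : Matrix (Fin n) (Fin n) ℂ) : (offDiagonalPart P ρ).trace = 0 := by
  have hpq : P * (1 - P) = 0 := by rw [mul_sub, mul_one, hP.eq, sub_self]
  have hqp : (1 - P) * P = 0 := by rw [sub_mul, one_mul, hP.eq, sub_self]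
  have h1 : (P * ρ * (1 - P)).trace = 0 := by
    rw [trace_mul_comm, ← mul_assoc, hqp, zero_mul, trace_zero]
  have h2 : ((1 - P) * ρ * P).trace = 0 := by
    rw [trace_mul_comm, ← mul_assoc, hpq, zero_mul, trace_zero]
  rw [offDiagonalPart, trace_add, h1, h2, add_zero]

lemma not_posSemidef_offDiagonalPart {P ρ : Matrix (Fin n) (Fin n) ℂ} (hP : IsIdempotentElem P)
    (hY : P * ρ * (1 - P) ≠ 0) : ¬ (offDiagonalPart P ρ).PosSemidef := fun hC ↦ by
  have hC0 := hC.trace_eq_zero_iff.mp (trace_offDiagonalPart hP ρ)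
  exact hY (by rw [← hP.mul_offDiagonalPart_mul_one_sub, hC0, mul_zero, zero_mul])

lemma lindblad_offDiagonalPart {h P ρ : Matrix (Fin n) (Fin n) ℂ} (hPh : Commute P h)
    (hPh' : Commute P hᴴ) (hstat : lindblad h ρ = 0) :
    lindblad h (offDiagonalPart P ρ) = 0 := by
  have hQh : Commute (1 - P) h := (Commute.one_left h).sub_left hPh
  have hQh' : Commute (1 - P) hᴴ := (Commute.one_left hᴴ).sub_left hPh'
  rw [offDiagonalPart, lindblad_add, lindblad_mul_mul_of_commute hPh hPh' hQh hQh',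
    lindblad_mul_mul_of_commute hQh hQh' hPh hPh', hstat]
  simp

lemma Matrix.PosSemidef.mul_eq_zero_of_add_smul_offDiagonalPart_mul_eq_zero
    {P ρ : Matrix (Fin n) (Fin n) ℂ} {t : ℝ} (hρ : ρ.PosSemidef) (hP : IsStarProjection P)
    (h : (ρ + t • offDiagonalPart P ρ) * P = 0) : P * ρ = 0 ∧ ρ * P = 0 := by
  have hPH : Pᴴ = P := hP.isSelfAdjoint
  have hPρ : P * ρ = 0 := by
    refine hρ.mul_eq_zero_of_mul_mul_conjTranspose_eq_zero_s14 ?_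
    calc P * ρ * Pᴴ = P * (ρ + t • offDiagonalPart P ρ) * P := by
          rw [hPH, mul_add, add_mul, Matrix.mul_smul, Matrix.smul_mul,
            hP.isIdempotentElem.mul_offDiagonalPart_mul_self, smul_zero, add_zero]
      _ = 0 := by rw [mul_assoc, h, mul_zero]
  refine ⟨hPρ, ?_⟩
  simpa [hPH, hρ.isHermitian.eq] using congrArg (·ᴴ) hPρ

end MatrixOffDiagonal

theorem stmt14_general {n : ℕ} (h P : Matrix (Fin n) (Fin n) ℂ)
    (hinv : IsUnit h)
    (hP1 : P = Pᴴ) (hP2 : P * P = P)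
    (hPh : P * h = h * P)
    (honly : ∀ Q : Matrix (Fin n) (Fin n) ℂ, Q = Qᴴ → Q * Q = Q → Q * h = h * Q →
      Q = 0 ∨ Q = P ∨ Q = 1 - P ∨ Q = 1)
    (ρ : Matrix (Fin n) (Fin n) ℂ) (hρ : ρ.PosSemidef)
    (hstat : lindblad h ρ = 0) :
    P * ρ * (1 - P) = 0 := by
  have hP : IsStarProjection P := ⟨hP2, hP1.symm⟩
  have hPh' : Commute P hᴴ := by
    simpa [Matrix.star_eq_conjTranspose, ← hP1] using Commute.star_star hPh
  by_contra hY
  obtain ⟨t, hσ, hσu⟩ := hρ.exists_posSemidef_add_smul_not_isUnit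
    (hP.isSelfAdjoint.offDiagonalPart hρ.isHermitian) (not_posSemidef_offDiagonalPart hP2 hY)
  have hσstat : lindblad h (ρ + t • offDiagonalPart P ρ) = 0 := by
    rw [lindblad_add, lindblad_smul, hstat, lindblad_offDiagonalPart hPh hPh' hstat, smul_zero,
      add_zero]
  obtain ⟨S, hS, hσS, X, hSX⟩ := hσ.isHermitian.exists_isStarProjection_mul_eq_self
  have hSh := commute_of_lindblad_eq_zero hinv hσ hσstat hS hσS hSX
  have hσ_mul_eq_zero {E : Matrix (Fin n) (Fin n) ℂ} (hSE : S * E = 0) :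
      (ρ + t • offDiagonalPart P ρ) * E = 0 := by
    rw [← hσS, mul_assoc, hSE, mul_zero]
  rcases honly S (hS.isSelfAdjoint : Sᴴ = S).symm hS.isIdempotentElem hSh.eq with
    rfl | rfl | rfl | rfl
  · have hPρ := hρ.mul_eq_zero_of_add_smul_offDiagonalPart_mul_eq_zero hP
      (hσ_mul_eq_zero (zero_mul P))
    exact hY (by rw [hPρ.1, zero_mul])
  · have hQ := hσ_mul_eq_zero hP.isIdempotentElem.mul_one_sub_self
    rw [← offDiagonalPart_one_sub] at hQ
    have hQρ := hρ.mul_eq_zero_of_add_smul_offDiagonalPart_mul_eq_zero hP.one_sub hQ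
    exact hY (by rw [mul_assoc, hQρ.2, mul_zero])
  · have hPρ := hρ.mul_eq_zero_of_add_smul_offDiagonalPart_mul_eq_zero hP
      (hσ_mul_eq_zero hP.isIdempotentElem.one_sub_mul_self)
    exact hY (by rw [hPρ.1, zero_mul])
  · exact hσu (IsUnit.of_mul_eq_one X hSX.symm)

/-- No stationary phase relations between inequivalent invertible parts. -/
theorem stmt14 {n : ℕ} (h P : Matrix (Fin n) (Fin n) ℂ)
    (hinv : IsUnit h)
    (hP1 : P = Pᴴ) (hP2 : P * P = P) (hP0 : P ≠ 0) (hPne1 : P ≠ 1)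
    (hPh : P * h = h * P)
    (honly : ∀ Q : Matrix (Fin n) (Fin n) ℂ, Q = Qᴴ → Q * Q = Q → Q * h = h * Q →
      Q = 0 ∨ Q = P ∨ Q = 1 - P ∨ Q = 1)
    (ρ : Matrix (Fin n) (Fin n) ℂ) (hρ : ρ.PosSemidef) (htr : ρ.trace = 1)
    (hstat : lindblad h ρ = 0) :
    P * ρ * (1 - P) = 0 :=
  stmt14_general h P hinv hP1 hP2 hPh honly ρ hρ hstat
end

section
/- (Construction of a simple evolution leading to a given faithful state.) Let ρ be a positive definite n×n complex matrix of trace 1 that is not the maximally mixed state (ρ ≠ 𝟙/n). Then there exists an indecomposable n×n complex matrix h such that for every density matrix σ, D_h(σ) = 0 if and only if σ = ρ; i.e. there is a simple Lindblad evolution having ρ as its unique stationary state. -/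
open Matrix
open scoped ComplexOrder

/-!
Write `ρ = U diag(s²) U*` with `s = √(eigenvalues)` sorted increasingly, and take `h = U H U*`
for the weighted cyclic shift `H e_j = (s j)⁻¹ e_(j+1)`, so that `H*H = diag(s⁻²)` and
`H diag(s)` is the plain cyclic shift. In the coordinates `σ = diag(s) τ diag(s)` the equation
`D_H(σ) = 0` reads `τ (a-1) (b-1) = ½ (s a / s b + s b / s a) τ a b`. The factor is `≥ 1`, so `‖τ‖`
is non-increasing, hence constant, along every cyclic diagonal, and it is `> 1` wherever
`s a ≠ s b`. A sorted non-constant `s` is not invariant under any non-trivial cyclic shift, so `τ`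
vanishes off the main diagonal and is constant on it: `σ ∝ ρ`, and the trace gives `σ = ρ`.
Likewise a projection commuting with `H` commutes with `H*H = diag(s⁻²)`, is therefore constant
along cyclic diagonals, and by the same aperiodicity is a scalar, hence `0` or `1`.
-/

open Function

theorem Equiv.Perm.permMatrix_mem_unitary {m R : Type*} [Fintype m] [DecidableEq m]
    [CommRing R] [StarRing R] (σ : Equiv.Perm m) :
    σ.permMatrix R ∈ unitary (Matrix m m R) := by
  simp [Unitary.mem_iff, star_eq_conjTranspose, ← permMatrix_mul]

theorem Equiv.Perm.permMatrix_mul_diagonal_mul_conjTranspose {m R : Type*} [Fintype m]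
    [DecidableEq m] [CommRing R] [StarRing R] (σ : Equiv.Perm m) (d : m → R) :
    σ.permMatrix R * diagonal d * (σ.permMatrix R)ᴴ = diagonal (d ∘ σ) := by
  rw [conjTranspose_permMatrix, PEquiv.toMatrix_toPEquiv_mul, PEquiv.mul_toMatrix_toPEquiv,
    Equiv.Perm.inv_def, Equiv.symm_symm, submatrix_submatrix]
  exact submatrix_diagonal_equiv d σ

theorem Matrix.IsHermitian.exists_unitary_monotone_eigenvalues {𝕜 : Type*} [RCLike 𝕜] {n : ℕ}
    {A : Matrix (Fin n) (Fin n) 𝕜} (hA : A.IsHermitian) :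
    ∃ (U : unitary (Matrix (Fin n) (Fin n) 𝕜)) (τ : Equiv.Perm (Fin n)),
      Monotone (hA.eigenvalues ∘ τ) ∧
        A = Unitary.conjStarAlgAut 𝕜 _ U (diagonal (RCLike.ofReal ∘ hA.eigenvalues ∘ τ)) := by
  set τ := Tuple.sort hA.eigenvalues
  let P : unitary (Matrix (Fin n) (Fin n) 𝕜) := ⟨τ.permMatrix 𝕜, τ.permMatrix_mem_unitary⟩
  refine ⟨hA.eigenvectorUnitary * star P, τ, Tuple.monotone_sort _, ?_⟩
  have hD : diagonal (RCLike.ofReal ∘ hA.eigenvalues ∘ τ) =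
      Unitary.conjStarAlgAut 𝕜 _ P (diagonal (RCLike.ofReal ∘ hA.eigenvalues)) :=
    (τ.permMatrix_mul_diagonal_mul_conjTranspose (RCLike.ofReal ∘ hA.eigenvalues)).symm
  rw [hD, ← StarAlgEquiv.mul_apply, ← map_mul, mul_assoc, Unitary.star_mul_self, mul_one,
    ← hA.spectral_theorem]

section StarAlgEquiv

variable {n : ℕ} (φ : Matrix (Fin n) (Fin n) ℂ ≃⋆ₐ[ℂ] Matrix (Fin n) (Fin n) ℂ)

theorem lindblad_map (h σ : Matrix (Fin n) (Fin n) ℂ) :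
    lindblad (φ h) (φ σ) = φ (lindblad h σ) := by
  simp only [lindblad, ← star_eq_conjTranspose, map_sub, map_smul, map_add, map_mul, map_star]

theorem lindblad_map_eq_zero_iff (h σ : Matrix (Fin n) (Fin n) ℂ) :
    lindblad (φ h) σ = 0 ↔ lindblad h (φ.symm σ) = 0 := by
  rw [← φ.apply_symm_apply σ, lindblad_map, map_eq_zero_iff φ φ.injective, φ.symm_apply_apply]

theorem Indecomposable.map {h : Matrix (Fin n) (Fin n) ℂ} (hh : Indecomposable h) :
    Indecomposable (φ h) := by
  intro P hP hPP hPh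
  have hQ : φ.symm P = (φ.symm P)ᴴ := by
    rw [← star_eq_conjTranspose, ← map_star, star_eq_conjTranspose, ← hP]
  have hQQ : φ.symm P * φ.symm P = φ.symm P := by rw [← map_mul, hPP]
  have hQh : φ.symm P * h = h * φ.symm P := by
    rw [← φ.symm_apply_apply h, ← map_mul, hPh, map_mul]
  rcases hh _ hQ hQQ hQh with h0 | h1
  · exact .inl (by simpa using congrArg φ h0)
  · exact .inr (by simpa using congrArg φ h1)

end StarAlgEquiv

namespace Fin

variable {n : ℕ} [NeZero n]

theorem apply_eq_apply_zero_of_periodic_one {α : Type*} {g : Fin n → α} (hg : Periodic g 1)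
    (k : Fin n) : g k = g 0 := by
  have := hg.nsmul_eq k.val
  open Fin.NatCast in rwa [nsmul_one, Fin.cast_val_eq_self] at this

theorem periodic_one_of_apply_add_one_le {M : Type*} [AddCommMonoid M] [PartialOrder M]
    [IsOrderedCancelAddMonoid M] {g : Fin n → M} (hg : ∀ k, g (k + 1) ≤ g k) :
    Periodic g 1 := by
  have hsum : ∑ k, g (k + 1) = ∑ k, g k := Equiv.sum_comp (Equiv.addRight (1 : Fin n)) g
  exact fun k => (Finset.sum_eq_sum_iff_of_le fun k _ => hg k).1 hsum k (Finset.mem_univ k)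

end Fin

theorem Monotone.apply_eq_apply_zero_of_periodic {n : ℕ} [NeZero n] {α : Type*}
    [PartialOrder α] {f : Fin n → α} (hf : Monotone f) {d : Fin n} (hd : Periodic f d)
    (hd0 : d ≠ 0) (k : Fin n) : f k = f 0 := by
  induction k using WellFoundedLT.induction with
  | _ k ih =>
    by_cases hkd : k ≤ d
    · exact le_antisymm ((hf hkd).trans_eq (by simpa using hd 0)) (hf (Fin.zero_le k))
    · have hlt : k - d < k := by
        rw [Fin.lt_def, Fin.coe_sub_iff_le.2 (not_le.1 hkd).le]
        have := Fin.pos_iff_ne_zero.2 hd0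
        omega
      rw [← sub_add_cancel k d, hd, ih _ hlt]

theorem one_le_div_add_div_div_two {x y : ℝ} (hx : 0 < x) (hy : 0 < y) :
    1 ≤ (x / y + y / x) / 2 := by
  rw [div_add_div _ _ hy.ne' hx.ne', le_div_iff₀ two_pos, one_mul, le_div_iff₀ (by positivity)]
  nlinarith [sq_nonneg (x - y)]

theorem one_lt_div_add_div_div_two {x y : ℝ} (hx : 0 < x) (hy : 0 < y) (hxy : x ≠ y) :
    1 < (x / y + y / x) / 2 := by
  rw [div_add_div _ _ hy.ne' hx.ne', lt_div_iff₀ two_pos, one_mul, lt_div_iff₀ (by positivity)]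
  nlinarith [sq_pos_of_ne_zero (sub_ne_zero.2 hxy)]

section WeightedShift

variable {n : ℕ} [NeZero n] {s : Fin n → ℝ}

/-- Maps `e j` to `e (j + 1)`. -/
abbrev cyclicShift (n : ℕ) [NeZero n] : Matrix (Fin n) (Fin n) ℂ :=
  Equiv.Perm.permMatrix ℂ (Equiv.subRight (1 : Fin n))

noncomputable def weightedShift (s : Fin n → ℝ) : Matrix (Fin n) (Fin n) ℂ :=
  cyclicShift n * diagonal fun i => (s i : ℂ)⁻¹

theorem conjTranspose_weightedShift_mul_self (s : Fin n → ℝ) :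
    (weightedShift s)ᴴ * weightedShift s = diagonal fun i => ((s i : ℂ) ^ 2)⁻¹ := by
  have hS : (cyclicShift n)ᴴ * cyclicShift n = 1 :=
    Unitary.star_mul_self_of_mem (Equiv.Perm.permMatrix_mem_unitary _)
  rw [weightedShift, conjTranspose_mul, Matrix.mul_assoc, ← Matrix.mul_assoc _ (cyclicShift n),
    hS, Matrix.one_mul, diagonal_conjTranspose, diagonal_mul_diagonal]
  simp [sq]

theorem weightedShift_mul_apply (s : Fin n → ℝ) (X : Matrix (Fin n) (Fin n) ℂ) (a b : Fin n) :
    (weightedShift s * X) a b = X (a - 1) b / s (a - 1) := by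
  rw [weightedShift, Matrix.mul_assoc, PEquiv.toMatrix_toPEquiv_mul, submatrix_apply,
    diagonal_mul]
  simp [div_eq_inv_mul]

theorem mul_weightedShift_apply (s : Fin n → ℝ) (X : Matrix (Fin n) (Fin n) ℂ) (a b : Fin n) :
    (X * weightedShift s) a b = X a (b + 1) / s b := by
  rw [weightedShift, ← Matrix.mul_assoc, PEquiv.mul_toMatrix_toPEquiv, mul_diagonal,
    submatrix_apply]
  simp [div_eq_mul_inv]

theorem weightedShift_mul_diagonal (hs : ∀ i, s i ≠ 0) :
    weightedShift s * diagonal (fun i => (s i : ℂ)) = cyclicShift n := by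
  rw [weightedShift, Matrix.mul_assoc, diagonal_mul_diagonal]
  simp [hs]

theorem lindblad_weightedShift_diagonal_conj_apply (hs : ∀ i, s i ≠ 0)
    (τ : Matrix (Fin n) (Fin n) ℂ) (a b : Fin n) :
    lindblad (weightedShift s)
        (diagonal (fun i => (s i : ℂ)) * τ * diagonal (fun i => (s i : ℂ))) a b =
      τ (a - 1) (b - 1) - ((s a / s b + s b / s a) / 2 : ℝ) * τ a b := by
  set D := diagonal fun i => (s i : ℂ)
  have hD : Dᴴ = D := by simp [D, diagonal_conjTranspose]
  have hshift : weightedShift s * (D * τ * D) * (weightedShift s)ᴴ =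
      τ.submatrix (Equiv.subRight 1) (Equiv.subRight 1) := by
    rw [← hD, ← Matrix.mul_assoc, ← Matrix.mul_assoc, Matrix.mul_assoc _ _ (weightedShift s)ᴴ,
      ← conjTranspose_mul, hD, weightedShift_mul_diagonal hs, conjTranspose_permMatrix,
      PEquiv.toMatrix_toPEquiv_mul, PEquiv.mul_toMatrix_toPEquiv, submatrix_submatrix]
    rfl
  have hs' : ∀ i, (s i : ℂ) ≠ 0 := fun i => Complex.ofReal_ne_zero.2 (hs i)
  simp only [lindblad, hshift, conjTranspose_weightedShift_mul_self, Matrix.sub_apply,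
    Matrix.smul_apply, Matrix.add_apply, submatrix_apply, Equiv.subRight_apply, D, diagonal_mul,
    mul_diagonal, smul_eq_mul]
  push_cast
  field_simp [hs']
  ring

theorem apply_add_eq_zero_of_forall_apply_eq (hs : ∀ i, 0 < s i) {τ : Matrix (Fin n) (Fin n) ℂ}
    (hτ : ∀ a b, τ a b =
      ((s (a + 1) / s (b + 1) + s (b + 1) / s (a + 1)) / 2 : ℝ) * τ (a + 1) (b + 1))
    {d : Fin n} (hd : ¬Periodic s d) (a : Fin n) : τ a (a + d) = 0 := by
  set g := fun x => ‖τ x (x + d)‖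
  have hg : ∀ x, g x =
      (s (x + 1) / s (x + 1 + d) + s (x + 1 + d) / s (x + 1)) / 2 * g (x + 1) := fun x => by
    change ‖τ x (x + d)‖ = _ * ‖τ (x + 1) (x + 1 + d)‖
    rw [hτ x (x + d), norm_mul, Complex.norm_real, add_right_comm,
      Real.norm_of_nonneg (zero_le_one.trans (one_le_div_add_div_div_two (hs _) (hs _)))]
  have hconst := Fin.apply_eq_apply_zero_of_periodic_one <|
    Fin.periodic_one_of_apply_add_one_le (g := g) fun x => by
      rw [hg x]
      exact le_mul_of_one_le_left (norm_nonneg _) (one_le_div_add_div_div_two (hs _) (hs _))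
  obtain ⟨x₀, hx₀⟩ : ∃ x, s (x + d) ≠ s x := by
    by_contra! h
    exact hd h
  have hx₀0 : g x₀ = 0 := by
    have h1 := hg (x₀ - 1)
    rw [sub_add_cancel, hconst (x₀ - 1), ← hconst x₀] at h1
    have h2 := one_lt_div_add_div_div_two (hs x₀) (hs (x₀ + d)) (Ne.symm hx₀)
    nlinarith [norm_nonneg (τ x₀ (x₀ + d))]
  exact norm_eq_zero.1 ((hconst a).trans ((hconst x₀).symm.trans hx₀0))

theorem lindblad_weightedShift_diagonal_conj_eq_zero_iff (hs : ∀ i, 0 < s i)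
    (hper : ∀ d, Periodic s d → d = 0) (τ : Matrix (Fin n) (Fin n) ℂ) :
    lindblad (weightedShift s)
        (diagonal (fun i => (s i : ℂ)) * τ * diagonal (fun i => (s i : ℂ))) = 0 ↔
      ∃ c : ℂ, τ = c • 1 := by
  have hs0 : ∀ i, s i ≠ 0 := fun i => (hs i).ne'
  have hκ : ∀ a, (s a / s a + s a / s a) / 2 = 1 := fun a => by
    rw [div_self (hs0 a)]; norm_num
  constructor
  · intro hL
    have hτ : ∀ a b, τ a b =
        ((s (a + 1) / s (b + 1) + s (b + 1) / s (a + 1)) / 2 : ℝ) * τ (a + 1) (b + 1) := by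
      intro a b
      have := congrFun (congrFun hL (a + 1)) (b + 1)
      rwa [lindblad_weightedShift_diagonal_conj_apply hs0, add_sub_cancel_right,
        add_sub_cancel_right, Matrix.zero_apply, sub_eq_zero] at this
    have hdiag : Periodic (fun a => τ a a) 1 := fun a => by simp [hτ a a, hκ]
    refine ⟨τ 0 0, ?_⟩
    ext a b
    by_cases hab : a = b
    · subst hab
      simpa using Fin.apply_eq_apply_zero_of_periodic_one hdiag a
    · have := apply_add_eq_zero_of_forall_apply_eq hs hτ
        (fun h => sub_ne_zero.2 (Ne.symm hab) (hper _ h)) a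
      rw [add_sub_cancel] at this
      simp [hab, this]
  · rintro ⟨c, rfl⟩
    ext a b
    rw [lindblad_weightedShift_diagonal_conj_apply hs0]
    by_cases hab : a = b
    · subst hab
      simp [hκ]
    · simp [hab]

theorem lindblad_weightedShift_eq_zero_iff (hs : ∀ i, 0 < s i)
    (hper : ∀ d, Periodic s d → d = 0) (σ : Matrix (Fin n) (Fin n) ℂ) :
    lindblad (weightedShift s) σ = 0 ↔ ∃ c : ℂ, σ = c • diagonal fun i => (s i : ℂ) ^ 2 := by
  set D := diagonal fun i => (s i : ℂ)
  set E := diagonal fun i => (s i : ℂ)⁻¹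
  have hs' : ∀ i, (s i : ℂ) ≠ 0 := fun i => Complex.ofReal_ne_zero.2 (hs i).ne'
  have hDE : D * E = 1 := by simp [D, E, diagonal_mul_diagonal, hs']
  have hED : E * D = 1 := by simp [D, E, diagonal_mul_diagonal, hs']
  have hDD : D * D = diagonal fun i => (s i : ℂ) ^ 2 := by simp [D, diagonal_mul_diagonal, sq]
  have hσ : σ = D * (E * σ * E) * D := by
    simp only [← Matrix.mul_assoc, hDE, Matrix.one_mul]
    rw [Matrix.mul_assoc, hED, Matrix.mul_one]
  rw [hσ, lindblad_weightedShift_diagonal_conj_eq_zero_iff hs hper, ← hσ, ← hDD]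
  refine exists_congr fun c => ⟨fun h => ?_, fun h => ?_⟩
  · rw [hσ, h, Matrix.mul_smul, Matrix.smul_mul, Matrix.mul_one]
  · rw [h, Matrix.mul_smul, Matrix.smul_mul, ← Matrix.mul_assoc, hED, Matrix.one_mul, hDE]

theorem eq_of_commute_weightedShift_of_apply_ne_zero (hs : ∀ i, 0 < s i)
    {P : Matrix (Fin n) (Fin n) ℂ} (hP : P = Pᴴ) (hPH : Commute P (weightedShift s)) {a b : Fin n}
    (hab : P a b ≠ 0) : s a = s b := by
  set H := weightedShift s
  have hPHt : Hᴴ * P = P * Hᴴ := by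
    simpa [conjTranspose_mul, ← hP] using congrArg conjTranspose hPH.eq
  have hPHH : P * (Hᴴ * H) = (Hᴴ * H) * P := by
    rw [← Matrix.mul_assoc, ← hPHt, Matrix.mul_assoc, hPH.eq, Matrix.mul_assoc]
  have h := congrFun (congrFun hPHH a) b
  rw [conjTranspose_weightedShift_mul_self, mul_diagonal, diagonal_mul, mul_comm] at h
  have h2 : (s b : ℂ) ^ 2 = (s a : ℂ) ^ 2 := inv_inj.1 (mul_right_cancel₀ hab h)
  exact ((sq_eq_sq₀ (hs b).le (hs a).le).1 (by exact_mod_cast h2)).symm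

theorem apply_add_one_add_one_of_commute_weightedShift (hs : ∀ i, 0 < s i)
    {P : Matrix (Fin n) (Fin n) ℂ} (hP : P = Pᴴ) (hPH : Commute P (weightedShift s))
    (a b : Fin n) : P (a + 1) (b + 1) = P a b := by
  have h := congrFun (congrFun hPH.eq (a + 1)) b
  rw [mul_weightedShift_apply, weightedShift_mul_apply, add_sub_cancel_right] at h
  by_cases hab : P a b = 0
  · rw [hab, zero_div, div_eq_zero_iff] at h
    exact (h.resolve_right (Complex.ofReal_ne_zero.2 (hs b).ne')).trans hab.symm
  · rwa [eq_of_commute_weightedShift_of_apply_ne_zero hs hP hPH hab,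
      div_left_inj' (Complex.ofReal_ne_zero.2 (hs b).ne')] at h

theorem indecomposable_weightedShift (hs : ∀ i, 0 < s i) (hper : ∀ d, Periodic s d → d = 0) :
    Indecomposable (weightedShift s) := by
  intro P hP hPP hPH
  have hdiagonals : ∀ d x, P x (x + d) = P 0 d := fun d => by
    simpa using Fin.apply_eq_apply_zero_of_periodic_one (g := fun x => P x (x + d)) fun x => by
      simp only
      rw [add_right_comm, apply_add_one_add_one_of_commute_weightedShift hs hP hPH]
  have hP_eq : P = P 0 0 • 1 := by
    ext a b
    have h := hdiagonals (b - a) a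
    rw [add_sub_cancel] at h
    by_cases hab : a = b
    · subst hab
      simpa using h
    · rw [h]
      simp only [Matrix.smul_apply, one_apply_ne hab, smul_zero]
      by_contra hne
      refine sub_ne_zero.2 (Ne.symm hab) (hper _ fun x => ?_)
      exact (eq_of_commute_weightedShift_of_apply_ne_zero hs hP hPH (by rwa [hdiagonals])).symm
  have hidem : P 0 0 * P 0 0 = P 0 0 := by
    have h := congrFun (congrFun hPP 0) 0
    rw [hP_eq] at h
    simpa using h
  rcases IsIdempotentElem.iff_eq_zero_or_one.1 hidem with h0 | h1
  · exact .inl (by rw [hP_eq, h0, zero_smul])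
  · exact .inr (by rw [hP_eq, h1, one_smul])

end WeightedShift

/-- Construction of a simple evolution leading to a given faithful state. -/
theorem stmt15 {n : ℕ} (ρ : Matrix (Fin n) (Fin n) ℂ)
    (hρ : ρ.PosDef) (htr : ρ.trace = 1)
    (hne : ρ ≠ ((n : ℂ))⁻¹ • (1 : Matrix (Fin n) (Fin n) ℂ)) :
    ∃ h : Matrix (Fin n) (Fin n) ℂ, Indecomposable h ∧
      ∀ σ : Matrix (Fin n) (Fin n) ℂ, σ.PosSemidef → σ.trace = 1 →
        (lindblad h σ = 0 ↔ σ = ρ) := by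
  have : NeZero n := ⟨by rintro rfl; simp at htr⟩
  obtain ⟨U, τ, hmono, hρU⟩ := hρ.1.exists_unitary_monotone_eigenvalues
  set φ := Unitary.conjStarAlgAut ℂ (Matrix (Fin n) (Fin n) ℂ) U
  set s : Fin n → ℝ := fun i => √(hρ.1.eigenvalues (τ i))
  have hs : ∀ i, 0 < s i := fun i => Real.sqrt_pos.2 (hρ.eigenvalues_pos _)
  have hρs : ρ = φ (diagonal fun i => (s i : ℂ) ^ 2) := by
    rw [hρU]
    congr
    funext i
    simp [s, ← Complex.ofReal_pow, Real.sq_sqrt (hρ.eigenvalues_pos _).le]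
  have hper : ∀ d, Periodic s d → d = 0 := by
    intro d hd
    by_contra hd0
    have hsmono : Monotone s := Real.sqrt_monotone.comp hmono
    have hconst := hsmono.apply_eq_apply_zero_of_periodic hd hd0
    have hρc : ρ = ((s 0 : ℂ) ^ 2) • 1 := by
      rw [hρs, ← map_one φ, ← map_smul, ← diagonal_one, ← diagonal_smul]
      congr 2
      funext i
      simp [hconst i]
    rw [hρc, trace_smul, trace_one, Fintype.card_fin, smul_eq_mul] at htr
    exact hne (by rw [hρc, eq_inv_of_mul_eq_one_left htr])
  refine ⟨φ (weightedShift s), (indecomposable_weightedShift hs hper).map φ, fun σ _ hσ => ?_⟩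
  rw [lindblad_map_eq_zero_iff, lindblad_weightedShift_eq_zero_iff hs hper]
  simp_rw [φ.symm_apply_eq, map_smul, ← hρs]
  refine ⟨?_, fun h => ⟨1, by rw [h, one_smul]⟩⟩
  rintro ⟨c, rfl⟩
  rw [trace_smul, htr, smul_eq_mul, mul_one] at hσ
  rw [hσ, one_smul]
end

section
/- Let h be an n×n complex matrix and regard the simple Lindblad generator D_h as a ℂ-linear endomorphism of the space of n×n complex matrices. Then every eigenvalue λ of D_h satisfies Re λ ≤ 0. -/
open Matrix

/-!
The Heisenberg-picture generator `D* = lindbladDual h` is the transpose of `D_h` for the pairing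
`(A, B) ↦ trace (A * B)`, so every eigenvalue `μ` of `D_h` is one of `D*`. The map `D*` kills `1`
and satisfies `D*(XᴴX) = Xᴴ D*(X) + D*(X)ᴴ X + CᴴC` with `C = X h - h X`, so an eigenvector `X`
gives `D*(XᴴX) ≥ 2 Re μ • XᴴX`. Evaluate both sides at a top eigenvector `u` of `XᴴX`, with
eigenvalue `p > 0`: writing `XᴴX = p - Q` with `Q ≥ 0` and `Q u = 0`, the left side becomes
`-⟪h u, Q (h u)⟫ ≤ 0`, hence `2 Re μ · p ‖u‖² ≤ 0`.
-/

open scoped ComplexOrder MatrixOrder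

namespace Matrix

variable {ι 𝕜 : Type*} [Fintype ι] [RCLike 𝕜]

noncomputable def lindbladDual (h : Matrix ι ι 𝕜) : Matrix ι ι 𝕜 →ₗ[𝕜] Matrix ι ι 𝕜 where
  toFun X := hᴴ * X * h - (1 / 2 : 𝕜) • (hᴴ * h * X + X * (hᴴ * h))
  map_add' X Y := by
    simp only [Matrix.mul_add, Matrix.add_mul, smul_add]
    abel
  map_smul' c X := by
    simp only [Matrix.mul_smul, Matrix.smul_mul, smul_add, smul_sub, RingHom.id_apply]
    module

theorem lindbladDual_apply (h X : Matrix ι ι 𝕜) :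
    lindbladDual h X = hᴴ * X * h - (1 / 2 : 𝕜) • (hᴴ * h * X + X * (hᴴ * h)) :=
  rfl

theorem lindbladDual_one [DecidableEq ι] (h : Matrix ι ι 𝕜) : lindbladDual h 1 = 0 := by
  rw [lindbladDual_apply, Matrix.mul_one, Matrix.mul_one, Matrix.one_mul, ← two_smul 𝕜 (hᴴ * h),
    smul_smul]
  norm_num

theorem lindbladDual_conjTranspose_mul_self (h X : Matrix ι ι 𝕜) :
    lindbladDual h (Xᴴ * X) = Xᴴ * lindbladDual h X + (lindbladDual h X)ᴴ * X
      + (X * h - h * X)ᴴ * (X * h - h * X) := by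
  simp only [lindbladDual_apply, conjTranspose_sub, conjTranspose_smul, conjTranspose_add,
    conjTranspose_mul, conjTranspose_conjTranspose, star_div₀, star_one, RCLike.star_def,
    map_ofNat, Matrix.mul_add, Matrix.add_mul, Matrix.mul_sub, Matrix.sub_mul, Matrix.mul_smul,
    Matrix.smul_mul, Matrix.mul_assoc]
  module

theorem dotProduct_lindbladDual_mulVec_of_mulVec_eq_zero (h : Matrix ι ι 𝕜)
    {Q : Matrix ι ι 𝕜} (hQ : Q.IsHermitian) {u : ι → 𝕜} (hu : Q *ᵥ u = 0) :
    star u ⬝ᵥ (lindbladDual h Q *ᵥ u) = star (h *ᵥ u) ⬝ᵥ (Q *ᵥ (h *ᵥ u)) := by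
  have hu' : star u ᵥ* Q = 0 := by
    rw [← hQ.eq, ← star_mulVec, hu, star_zero]
  have hanticommutator : star u ⬝ᵥ ((hᴴ * h * Q + Q * (hᴴ * h)) *ᵥ u) = 0 := by
    rw [add_mulVec, ← mulVec_mulVec (M := hᴴ * h), hu, mulVec_zero, zero_add, dotProduct_mulVec,
      ← vecMul_vecMul, hu', zero_vecMul, zero_dotProduct]
  have hsandwich : star u ⬝ᵥ ((hᴴ * Q * h) *ᵥ u) = star (h *ᵥ u) ⬝ᵥ (Q *ᵥ (h *ᵥ u)) := by
    rw [← mulVec_mulVec, ← mulVec_mulVec, dotProduct_mulVec, ← star_mulVec]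
  rw [lindbladDual_apply, sub_mulVec, dotProduct_sub, smul_mulVec, dotProduct_smul,
    hanticommutator, smul_zero, sub_zero, hsandwich]

theorem PosSemidef.exists_eigenvector_le_algebraMap [DecidableEq ι] {P : Matrix ι ι 𝕜}
    (hP : P.PosSemidef) (hP₀ : P ≠ 0) :
    ∃ (p : ℝ) (u : ι → 𝕜), 0 < p ∧ u ≠ 0 ∧ P *ᵥ u = (p : 𝕜) • u ∧ P ≤ algebraMap ℝ _ p := by
  have : Nonempty ι := by
    by_contra hι
    exact hP₀ (Matrix.ext fun i => (hι ⟨i⟩).elim)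
  obtain ⟨k, -, hk⟩ := Finset.exists_max_image Finset.univ hP.1.eigenvalues Finset.univ_nonempty
  refine ⟨hP.1.eigenvalues k, hP.1.eigenvectorBasis k, ?_, ?_, ?_, ?_⟩
  · refine (hP.eigenvalues_nonneg k).lt_of_ne fun hk₀ => hP₀ ?_
    rw [← hP.1.eigenvalues_eq_zero_iff]
    exact funext fun i =>
      ((hk i (Finset.mem_univ i)).trans hk₀.symm.le).antisymm (hP.eigenvalues_nonneg i)
  · exact (WithLp.ofLp_eq_zero 2).ne.2 <| hP.1.eigenvectorBasis.orthonormal.ne_zero k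
  · rw [hP.1.mulVec_eigenvectorBasis, RCLike.real_smul_eq_coe_smul (K := 𝕜)]
  · refine le_algebraMap_of_spectrum_le (fun x hx => ?_) hP.1.isSelfAdjoint
    obtain ⟨i, rfl⟩ := hP.1.spectrum_real_eq_range_eigenvalues ▸ hx
    exact hk i (Finset.mem_univ i)

theorem re_dotProduct_lindbladDual_mulVec_nonpos [DecidableEq ι] (h : Matrix ι ι 𝕜)
    {P : Matrix ι ι 𝕜} {p : ℝ} {u : ι → 𝕜} (hu : P *ᵥ u = (p : 𝕜) • u)
    (hP : P ≤ algebraMap ℝ _ p) :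
    RCLike.re (star u ⬝ᵥ (lindbladDual h P *ᵥ u)) ≤ 0 := by
  set Q := algebraMap ℝ (Matrix ι ι 𝕜) p - P
  have hQ : Q.PosSemidef := hP
  have hQu : Q *ᵥ u = 0 := by
    rw [sub_mulVec, hu, Algebra.algebraMap_eq_smul_one, smul_mulVec, one_mulVec,
      RCLike.real_smul_eq_coe_smul (K := 𝕜), sub_self]
  have hPQ : lindbladDual h P = -lindbladDual h Q := by
    rw [map_sub, Algebra.algebraMap_eq_smul_one, LinearMap.map_smul_of_tower, lindbladDual_one,
      smul_zero, zero_sub, neg_neg]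
  rw [hPQ, neg_mulVec, dotProduct_neg, map_neg, neg_nonpos,
    dotProduct_lindbladDual_mulVec_of_mulVec_eq_zero h hQ.1 hQu]
  exact hQ.re_dotProduct_nonneg _

theorem re_nonpos_of_hasEigenvalue_lindbladDual [DecidableEq ι] (h : Matrix ι ι 𝕜) {μ : 𝕜}
    (hμ : Module.End.HasEigenvalue (lindbladDual h) μ) : RCLike.re μ ≤ 0 := by
  obtain ⟨X, hX⟩ := hμ.exists_hasEigenvector
  set C := X * h - h * X
  obtain ⟨p, u, hp, hu₀, hu, hle⟩ :=
    (posSemidef_conjTranspose_mul_self X).exists_eigenvector_le_algebraMap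
      (conjTranspose_mul_self_eq_zero.not.mpr hX.2)
  have hdual : lindbladDual h (Xᴴ * X) = ((2 * RCLike.re μ : ℝ) : 𝕜) • (Xᴴ * X) + Cᴴ * C := by
    rw [lindbladDual_conjTranspose_mul_self, hX.apply_eq_smul, conjTranspose_smul,
      Matrix.mul_smul, Matrix.smul_mul, ← add_smul, RCLike.star_def, RCLike.add_conj]
    push_cast
    rfl
  have hu_pos : 0 < RCLike.re (star u ⬝ᵥ u) :=
    (RCLike.pos_iff.mp (dotProduct_star_self_pos_iff.mpr hu₀)).1
  have hC : 0 ≤ RCLike.re (star u ⬝ᵥ ((Cᴴ * C) *ᵥ u)) :=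
    (posSemidef_conjTranspose_mul_self C).re_dotProduct_nonneg u
  have hmax := re_dotProduct_lindbladDual_mulVec_nonpos h hu hle
  rw [hdual, add_mulVec, smul_mulVec, hu, dotProduct_add, dotProduct_smul, dotProduct_smul,
    smul_eq_mul, smul_eq_mul, map_add, ← mul_assoc, ← RCLike.ofReal_mul,
    RCLike.re_ofReal_mul] at hmax
  nlinarith [mul_pos hp hu_pos]

end Matrix

theorem trace_lindblad_mul {n : ℕ} (h σ X : Matrix (Fin n) (Fin n) ℂ) :
    trace (lindblad h σ * X) = trace (σ * lindbladDual h X) := by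
  simp only [lindblad, lindbladDual_apply, Matrix.sub_mul, Matrix.mul_sub, Matrix.smul_mul,
    Matrix.mul_smul, Matrix.add_mul, Matrix.mul_add, trace_sub, trace_smul, trace_add]
  have hjump : trace (h * σ * hᴴ * X) = trace (σ * (hᴴ * X * h)) := by
    rw [Matrix.mul_assoc, Matrix.mul_assoc, trace_mul_comm]
    simp only [Matrix.mul_assoc]
  have hdamp : trace (hᴴ * h * σ * X) = trace (σ * (X * (hᴴ * h))) := by
    rw [Matrix.mul_assoc (hᴴ * h), trace_mul_comm, Matrix.mul_assoc]
  rw [hjump, hdamp, Matrix.mul_assoc σ, add_comm]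

theorem hasEigenvalue_lindbladDual_of_lindblad_eq_smul {n : ℕ}
    {h σ : Matrix (Fin n) (Fin n) ℂ} {l : ℂ} (hσ : σ ≠ 0) (heig : lindblad h σ = l • σ) :
    Module.End.HasEigenvalue (lindbladDual h) l := by
  rw [Module.End.hasEigenvalue_iff_mem_spectrum, spectrum.mem_iff]
  intro hunit
  obtain ⟨B, hB⟩ := (Module.End.isUnit_iff _ |>.mp hunit).2 σᴴ
  have hpair : trace (σ * σᴴ) = 0 := by
    rw [← hB, LinearMap.sub_apply, Module.algebraMap_end_apply, Matrix.mul_sub, trace_sub,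
      ← trace_lindblad_mul, heig, Matrix.smul_mul, Matrix.mul_smul, sub_self]
  exact hσ (trace_mul_conjTranspose_self_eq_zero_iff.mp hpair)

/-- Every eigenvalue of the simple Lindblad generator `D_h`, viewed as a `ℂ`-linear
endomorphism of the matrices, has nonpositive real part. -/
theorem stmt17 {n : ℕ} (h : Matrix (Fin n) (Fin n) ℂ) (l : ℂ)
    (σ : Matrix (Fin n) (Fin n) ℂ) (hσ : σ ≠ 0) (heig : lindblad h σ = l • σ) :
    l.re ≤ 0 :=
  re_nonpos_of_hasEigenvalue_lindbladDual h
    (hasEigenvalue_lindbladDual_of_lindblad_eq_smul hσ heig)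
end

section
/- (No circular paths.) Let h be an n×n complex matrix and regard the simple Lindblad generator D_h as a ℂ-linear endomorphism of the space of n×n complex matrices. If λ is an eigenvalue of D_h with Re λ = 0, then λ = 0; D_h has no eigenvalues on the imaginary axis except 0, and hence there are no periodic (circular) paths of states. -/
/-!
Let `K = hᴴ h`. If `D_h σ = l σ` then `h σ hᴴ = l σ + ½ (Kσ + σK)`; compare the squared
Hilbert–Schmidt norms `tr (X Xᴴ)` of both sides. The left side is `tr (σ K σᴴ K)`. On the right,
the cross term vanishes because `l` is purely imaginary while `tr (σ (Kσ + σK)ᴴ)` is real, and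
`‖Kσ + σK‖² = ‖Kσ - σK‖² + 4 tr (σ K σᴴ K)`. The terms `tr (σ K σᴴ K)` cancel, leaving
`|l|² ‖σ‖² + ¼ ‖Kσ - σK‖² = 0`, so `l = 0` since `σ ≠ 0`.
-/

open Matrix

namespace Matrix

variable {R : Type*} [CommRing R] [StarRing R] {m n : Type*} [Fintype m] [Fintype n]

theorem trace_smul_add_smul_mul_conjTranspose (a b : R) (A B : Matrix m n R) :
    trace ((a • A + b • B) * (a • A + b • B)ᴴ) =
      a * star a * trace (A * Aᴴ) + (a * star b * trace (A * Bᴴ) +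
        star (a * star b * trace (A * Bᴴ))) + b * star b * trace (B * Bᴴ) := by
  rw [star_mul', ← trace_conjTranspose, conjTranspose_mul, conjTranspose_conjTranspose]
  simp only [conjTranspose_add, conjTranspose_smul, Matrix.add_mul, Matrix.mul_add,
    Matrix.smul_mul, Matrix.mul_smul, trace_add, trace_smul, smul_eq_mul, star_mul', star_star]
  ring

theorem trace_add_mul_conjTranspose_add (X Y : Matrix m n R) :
    trace ((X + Y) * (X + Y)ᴴ) =
      trace ((X - Y) * (X - Y)ᴴ) + 2 * (trace (X * Yᴴ) + trace (Y * Xᴴ)) := by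
  simp only [conjTranspose_add, conjTranspose_sub, Matrix.add_mul, Matrix.mul_add,
    Matrix.sub_mul, Matrix.mul_sub, trace_add, trace_sub]
  ring

theorem trace_conj_mul_conjTranspose (h σ : Matrix n n R) :
    trace (h * σ * hᴴ * (h * σ * hᴴ)ᴴ) = trace (σ * (hᴴ * h) * σᴴ * (hᴴ * h)) := by
  rw [conjTranspose_mul, conjTranspose_mul, conjTranspose_conjTranspose,
    show h * σ * hᴴ * (h * (σᴴ * hᴴ)) = h * (σ * (hᴴ * h) * σᴴ * hᴴ) by noncomm_ring,
    trace_mul_comm, show σ * (hᴴ * h) * σᴴ * hᴴ * h = σ * (hᴴ * h) * σᴴ * (hᴴ * h) by noncomm_ring]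

variable {K : Matrix n n R}

theorem IsHermitian.isSelfAdjoint_trace_mul_conjTranspose_anticommutator (hK : K.IsHermitian)
    (σ : Matrix n n R) : IsSelfAdjoint (trace (σ * (K * σ + σ * K)ᴴ)) := by
  rw [IsSelfAdjoint, ← trace_conjTranspose, conjTranspose_mul, conjTranspose_conjTranspose]
  simp only [conjTranspose_add, conjTranspose_mul, hK.eq, Matrix.add_mul, Matrix.mul_add,
    trace_add]
  rw [Matrix.mul_assoc K, trace_mul_comm K, Matrix.mul_assoc, Matrix.mul_assoc]

theorem IsHermitian.trace_anticommutator_mul_conjTranspose (hK : K.IsHermitian)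
    (σ : Matrix n n R) :
    trace ((K * σ + σ * K) * (K * σ + σ * K)ᴴ) =
      trace ((K * σ - σ * K) * (K * σ - σ * K)ᴴ) + 4 * trace (σ * K * σᴴ * K) := by
  have h₁ : trace (K * σ * (σ * K)ᴴ) = trace (σ * K * σᴴ * K) := by
    rw [conjTranspose_mul, hK.eq, show K * σ * (K * σᴴ) = K * (σ * K * σᴴ) by noncomm_ring,
      trace_mul_comm]
  have h₂ : trace (σ * K * (K * σ)ᴴ) = trace (σ * K * σᴴ * K) := by
    rw [conjTranspose_mul, hK.eq, ← Matrix.mul_assoc]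
  rw [trace_add_mul_conjTranspose_add, h₁, h₂]
  ring

end Matrix

theorem lindblad_eq_smul_iff {n : ℕ} {h σ : Matrix (Fin n) (Fin n) ℂ} {l : ℂ} :
    lindblad h σ = l • σ ↔
      h * σ * hᴴ = l • σ + (1 / 2 : ℂ) • (hᴴ * h * σ + σ * (hᴴ * h)) := by
  rw [lindblad, sub_eq_iff_eq_add]

theorem lindblad_eq_smul_trace_identity {n : ℕ} {h σ : Matrix (Fin n) (Fin n) ℂ} {l : ℂ}
    (heig : lindblad h σ = l • σ) (hre : l.re = 0) :
    ‖l‖ ^ 2 * trace (σ * σᴴ) +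
      (1 / 4 : ℂ) * trace ((hᴴ * h * σ - σ * (hᴴ * h)) * (hᴴ * h * σ - σ * (hᴴ * h))ᴴ) = 0 := by
  set K := hᴴ * h
  set S := K * σ + σ * K
  have hK : K.IsHermitian := isHermitian_conjTranspose_mul_self h
  have hl : star l = -l := by
    apply Complex.ext <;> simp [hre]
  have hnorm : l * star l = ‖l‖ ^ 2 := Complex.mul_conj' l
  have hhalf : star (1 / 2 : ℂ) = 1 / 2 := by norm_num [Complex.ext_iff]
  have hreal : star (trace (σ * Sᴴ)) = trace (σ * Sᴴ) :=
    (hK.isSelfAdjoint_trace_mul_conjTranspose_anticommutator σ).star_eq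
  have hsq : trace (σ * K * σᴴ * K) =
      ‖l‖ ^ 2 * trace (σ * σᴴ) + (1 / 4 : ℂ) * trace (S * Sᴴ) :=
    calc trace (σ * K * σᴴ * K)
        = trace (h * σ * hᴴ * (h * σ * hᴴ)ᴴ) := (trace_conj_mul_conjTranspose h σ).symm
      _ = trace ((l • σ + (1 / 2 : ℂ) • S) * (l • σ + (1 / 2 : ℂ) • S)ᴴ) := by
          rw [lindblad_eq_smul_iff.1 heig]
      _ = ‖l‖ ^ 2 * trace (σ * σᴴ) + (1 / 4 : ℂ) * trace (S * Sᴴ) := by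
          rw [trace_smul_add_smul_mul_conjTranspose, hnorm]
          simp only [star_mul', hhalf, hl, hreal]
          ring
  rw [hK.trace_anticommutator_mul_conjTranspose] at hsq
  linear_combination -hsq

open scoped ComplexOrder in
theorem eq_zero_of_sq_norm_mul_trace_add_trace_eq_zero {m : Type*} [Fintype m]
    {σ C : Matrix m m ℂ} (hσ : σ ≠ 0) {l : ℂ}
    (h : ‖l‖ ^ 2 * trace (σ * σᴴ) + (1 / 4 : ℂ) * trace (C * Cᴴ) = 0) : l = 0 := by
  by_contra hl
  have hnorm : (0 : ℂ) < ‖l‖ ^ 2 := by exact_mod_cast pow_pos (norm_pos_iff.2 hl) 2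
  have hσσ : 0 < trace (σ * σᴴ) :=
    (posSemidef_self_mul_conjTranspose σ).trace_nonneg.lt_of_ne'
      (trace_mul_conjTranspose_self_eq_zero_iff.not.2 hσ)
  have hCC : 0 ≤ trace (C * Cᴴ) := (posSemidef_self_mul_conjTranspose C).trace_nonneg
  exact (add_pos_of_pos_of_nonneg (mul_pos hnorm hσσ) (mul_nonneg (by positivity) hCC)).ne' h

/-- No circular paths: the simple Lindblad generator `D_h`, viewed as a `ℂ`-linear
endomorphism of the matrices, has no eigenvalue on the imaginary axis except `0`. -/
theorem stmt18 {n : ℕ} (h : Matrix (Fin n) (Fin n) ℂ) (l : ℂ)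
    (σ : Matrix (Fin n) (Fin n) ℂ) (hσ : σ ≠ 0) (heig : lindblad h σ = l • σ)
    (hre : l.re = 0) :
    l = 0 :=
  eq_zero_of_sq_norm_mul_trace_add_trace_eq_zero hσ (lindblad_eq_smul_trace_identity heig hre)
end

section
/- (Kadison inequality.) Let Φ be a ℂ-linear map on n×n complex matrices which is unital (Φ(𝟙) = 𝟙) and completely positive, meaning that for every m ≥ 1 the entrywise amplification 𝟙ₘ ⊗ Φ, acting on (m·n)×(m·n) complex matrices viewed as m×m block matrices with n×n blocks by applying Φ to each block, maps positive semidefinite matrices to positive semidefinite matrices. Then for every n×n complex matrix F, the matrix Φ(F†F) − Φ(F†)Φ(F) is positive semidefinite. -/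
open Matrix
open scoped ComplexOrder

/-!
The block matrix `[[F†F, F†], [F, 𝟙]]` is `X†X` for `X = [F 𝟙]`, hence positive semidefinite.
Complete positivity with `m = 2` and unitality make `[[Φ(F†F), Φ(F†)], [Φ(F), 𝟙]]` positive
semidefinite, and its Schur complement with respect to the block `𝟙` is `Φ(F†F) - Φ(F†)Φ(F)`.
-/

namespace Matrix

section Schur

variable {𝕜 : Type*} [RCLike 𝕜] {m n : Type*} [Fintype m] [Fintype n] [DecidableEq m]

theorem posSemidef_fromBlocks_conjTranspose_mul_self_one (F : Matrix m n 𝕜) :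
    (fromBlocks (Fᴴ * F) Fᴴ F 1).PosSemidef := by
  simpa [conjTranspose_fromCols_eq_fromRows_conjTranspose, fromRows_mul_fromCols] using
    posSemidef_conjTranspose_mul_self (fromCols F (1 : Matrix m m 𝕜))

theorem PosSemidef.sub_mul_of_fromBlocks_one {A : Matrix n n 𝕜} {B : Matrix n m 𝕜}
    {C : Matrix m n 𝕜} (h : (fromBlocks A B C 1).PosSemidef) : (A - B * C).PosSemidef := by
  obtain rfl : C = Bᴴ := (isHermitian_fromBlocks_iff.mp h.isHermitian).2.1.symm
  have : Invertible (1 : Matrix m m 𝕜) := invertibleOne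
  simpa using (PosDef.fromBlocks₂₂ A B PosDef.one).mp h

end Schur

/-- `(𝟙 ⊗ Φ) M`, for `M` viewed as a `μ × μ` matrix of blocks. -/
def amplification {μ ι κ α β : Type*} (Φ : Matrix ι ι α → Matrix κ κ β)
    (M : Matrix (μ × ι) (μ × ι) α) : Matrix (μ × κ) (μ × κ) β :=
  of fun p q => Φ (of fun k l => M (p.1, k) (q.1, l)) p.2 q.2

def finTwoProdEquivSum (α : Type*) : Fin 2 × α ≃ α ⊕ α :=
  (finTwoEquiv.prodCongr (Equiv.refl α)).trans (Equiv.boolProdEquivSum α)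

theorem amplification_fromBlocks_submatrix {ι κ α β : Type*} (Φ : Matrix ι ι α → Matrix κ κ β)
    (A B C D : Matrix ι ι α) :
    amplification Φ
        ((fromBlocks A B C D).submatrix (finTwoProdEquivSum ι) (finTwoProdEquivSum ι)) =
      (fromBlocks (Φ A) (Φ B) (Φ C) (Φ D)).submatrix (finTwoProdEquivSum κ)
        (finTwoProdEquivSum κ) := by
  ext ⟨i, k⟩ ⟨j, l⟩
  fin_cases i <;> fin_cases j <;> rfl

end Matrix

/-- Kadison inequality for unital completely positive maps on matrices. -/
theorem stmt19 {n : ℕ}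
    (Φ : Matrix (Fin n) (Fin n) ℂ →ₗ[ℂ] Matrix (Fin n) (Fin n) ℂ)
    (hunital : Φ 1 = 1)
    (hcp : ∀ m : ℕ, ∀ M : Matrix (Fin m × Fin n) (Fin m × Fin n) ℂ, M.PosSemidef →
      (Matrix.of fun p q : Fin m × Fin n =>
        Φ (Matrix.of fun k l : Fin n => M (p.1, k) (q.1, l)) p.2 q.2).PosSemidef)
    (F : Matrix (Fin n) (Fin n) ℂ) :
    (Φ (Fᴴ * F) - Φ Fᴴ * Φ F).PosSemidef := by
  have h : (amplification Φ ((fromBlocks (Fᴴ * F) Fᴴ F 1).submatrix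
      (finTwoProdEquivSum (Fin n)) (finTwoProdEquivSum (Fin n)))).PosSemidef :=
    hcp 2 _ ((posSemidef_fromBlocks_conjTranspose_mul_self_one F).submatrix _)
  rw [amplification_fromBlocks_submatrix, posSemidef_submatrix_equiv, hunital] at h
  exact h.sub_mul_of_fromBlocks_one
end
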